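/- arXiv:1405.3029 — 7 statements merged into one kernel-verified Lean document; each statement's English description precedes it below -/
import Mathlib

section
/- Suppose E ln|φ₀ + b₀ ε₁| < 0. Then for every t ∈ ℤ the random series Σ_{i=1}^∞ [∏_{r=0}^{i−1} (φ₀ + b₀ ε_{t−2r−1})] (μ₀ + ε_{t−2i}) converges absolutely almost surely; in particular S_t is almost surely well defined and finite. -/
open MeasureTheory ProbabilityTheory Filter

noncomputable section

/-- Positive part of the logarithm, valued in `ℝ≥0∞`. -/
def logPlus (x : ℝ) : ENNReal := ENNReal.ofReal (Real.log x)

/-- Negative part of the logarithm with the convention `log 0 = -∞`. -/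
def logMinus (x : ℝ) : ENNReal := if x = 0 then ⊤ else ENNReal.ofReal (-(Real.log x))

/-- `E log |X|` as an extended real number, with the convention `log 0 = -∞`. -/
def elogAbs {Ω : Type*} [MeasurableSpace Ω] (P : Measure Ω) (X : Ω → ℝ) : EReal :=
  ((∫⁻ ω, logPlus |X ω| ∂P : ENNReal) : EReal) - ((∫⁻ ω, logMinus |X ω| ∂P : ENNReal) : EReal)

/-- The `i`-th term (for `i = j+1 ≥ 1`) of the series defining the stationary solution:
`(∏_{r=0}^{i-1} (φ₀ + b₀ ε_{t-2r-1})) (μ₀ + ε_{t-2i})`. -/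
def blTerm {Ω : Type*} (μ₀ φ₀ b₀ : ℝ) (ε : ℤ → Ω → ℝ) (t : ℤ) (j : ℕ) (ω : Ω) : ℝ :=
  (∏ r ∈ Finset.range (j + 1), (φ₀ + b₀ * ε (t - 2 * (r : ℤ) - 1) ω)) *
    (μ₀ + ε (t - 2 * ((j : ℤ) + 1)) ω)

/-- `S_t = μ₀ + ε_t + Σ_{i=1}^∞ [∏_{r=0}^{i-1} (φ₀ + b₀ ε_{t-2r-1})] (μ₀ + ε_{t-2i})`. -/
def blS {Ω : Type*} (μ₀ φ₀ b₀ : ℝ) (ε : ℤ → Ω → ℝ) (t : ℤ) (ω : Ω) : ℝ :=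
  μ₀ + ε t ω + ∑' j : ℕ, blTerm μ₀ φ₀ b₀ ε t j ω

/-- truncated log: behaves like `max (log |y|) (-M)` with value `-M` at `0`. -/
def blF (M : ℝ) (y : ℝ) : ℝ :=
  max (Real.log |y|) 0 - (min (logMinus |y|) (ENNReal.ofReal M)).toReal

lemma measurable_logMinus : Measurable logMinus := by
  unfold logMinus
  exact Measurable.ite (MeasurableSet.singleton 0) measurable_const
    ((Real.measurable_log.neg).ennreal_ofReal)

lemma measurable_blF (M : ℝ) : Measurable (blF M) := by
  unfold blF
  exact ((Real.measurable_log.comp measurable_abs).max measurable_const).sub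
    (((measurable_logMinus.comp measurable_abs).min measurable_const).ennreal_toReal)

lemma neg_part_toReal_le (M : ℝ) (y : ℝ) :
    (min (logMinus |y|) (ENNReal.ofReal M)).toReal ≤ max M 0 := by
  have h1 : (min (logMinus |y|) (ENNReal.ofReal M)) ≤ ENNReal.ofReal M := min_le_right _ _
  calc (min (logMinus |y|) (ENNReal.ofReal M)).toReal
      ≤ (ENNReal.ofReal M).toReal := ENNReal.toReal_mono ENNReal.ofReal_ne_top h1
    _ = max M 0 := ENNReal.toReal_ofReal'

lemma abs_le_exp_blF {M : ℝ} (hM : 0 ≤ M) (y : ℝ) : |y| ≤ Real.exp (blF M y) := by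
  rcases eq_or_ne y 0 with rfl | hy
  · simpa using (Real.exp_pos (blF M 0)).le
  · have hya : |y| ≠ 0 := by simpa [abs_eq_zero] using hy
    have hlog : Real.log |y| ≤ blF M y := by
      unfold blF logMinus
      rw [if_neg hya]
      have h2 : (min (ENNReal.ofReal (-Real.log |y|)) (ENNReal.ofReal M)).toReal
          ≤ max (-Real.log |y|) 0 := by
        calc (min (ENNReal.ofReal (-Real.log |y|)) (ENNReal.ofReal M)).toReal
            ≤ (ENNReal.ofReal (-Real.log |y|)).toReal :=
              ENNReal.toReal_mono ENNReal.ofReal_ne_top (min_le_left _ _)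
          _ = max (-Real.log |y|) 0 := ENNReal.toReal_ofReal'
      have := max_zero_sub_max_neg_zero_eq_self (Real.log |y|)
      linarith
    calc |y| = Real.exp (Real.log |y|) := (Real.exp_log (abs_pos.2 hy)).symm
      _ ≤ _ := Real.exp_le_exp.2 hlog

lemma abs_blF_le {M : ℝ} (hM : 0 ≤ M) (y : ℝ) : |blF M y| ≤ |y| + M := by
  have h1 : 0 ≤ max (Real.log |y|) 0 := le_max_right _ _
  have h2 : max (Real.log |y|) 0 ≤ |y| := by
    refine max_le (Real.log_le_self (abs_nonneg _)) (abs_nonneg _)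
  have h3 := neg_part_toReal_le M y
  have h4 : (0:ℝ) ≤ (min (logMinus |y|) (ENNReal.ofReal M)).toReal := ENNReal.toReal_nonneg
  have h5 : max M 0 = M := max_eq_left hM
  rw [abs_le]; constructor <;> [skip; skip] <;> unfold blF <;> nlinarith

lemma blF_eq_toReal_sub (M : ℝ) (y : ℝ) :
    blF M y = (logPlus |y|).toReal - (min (logMinus |y|) (ENNReal.ofReal M)).toReal := by
  unfold blF logPlus
  rw [ENNReal.toReal_ofReal']

end

section
variable {Ω : Type*} [MeasurableSpace Ω] (P : Measure Ω) [IsProbabilityMeasure P]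

lemma lintegral_min_const_ne_top {g : Ω → ENNReal} (M : ℝ) :
    ∫⁻ ω, min (g ω) (ENNReal.ofReal M) ∂P ≠ ⊤ := by
  refine ne_top_of_le_ne_top ?_ (lintegral_mono fun ω => min_le_right _ _)
  simp [lintegral_const]

lemma integral_blF_eq {A : Ω → ℝ} (hA : Measurable A)
    (hP : ∫⁻ ω, logPlus |A ω| ∂P ≠ ⊤) (M : ℝ) :
    ∫ ω, blF M (A ω) ∂P =
      (∫⁻ ω, logPlus |A ω| ∂P).toReal -
        (∫⁻ ω, min (logMinus |A ω|) (ENNReal.ofReal M) ∂P).toReal := by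
  have hfm : Measurable fun ω => logPlus |A ω| :=
    (Real.measurable_log.comp (measurable_abs.comp hA)).ennreal_ofReal
  have hgm : Measurable fun ω => min (logMinus |A ω|) (ENNReal.ofReal M) :=
    (measurable_logMinus.comp (measurable_abs.comp hA)).min measurable_const
  have hflt : ∀ᵐ ω ∂P, logPlus |A ω| < ⊤ := ae_of_all _ fun ω => ENNReal.ofReal_lt_top
  have hglt : ∀ᵐ ω ∂P, min (logMinus |A ω|) (ENNReal.ofReal M) < ⊤ :=
    ae_of_all _ fun ω => lt_of_le_of_lt (min_le_right _ _) ENNReal.ofReal_lt_top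
  have hfi : Integrable (fun ω => (logPlus |A ω|).toReal) P :=
    integrable_toReal_of_lintegral_ne_top hfm.aemeasurable hP
  have hgi : Integrable (fun ω => (min (logMinus |A ω|) (ENNReal.ofReal M)).toReal) P :=
    integrable_toReal_of_lintegral_ne_top hgm.aemeasurable (lintegral_min_const_ne_top P M)
  calc ∫ ω, blF M (A ω) ∂P
      = ∫ ω, ((logPlus |A ω|).toReal
          - (min (logMinus |A ω|) (ENNReal.ofReal M)).toReal) ∂P := by
        simp only [blF_eq_toReal_sub]
    _ = (∫ ω, (logPlus |A ω|).toReal ∂P)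
          - ∫ ω, (min (logMinus |A ω|) (ENNReal.ofReal M)).toReal ∂P :=
        integral_sub hfi hgi
    _ = _ := by
        rw [integral_toReal hfm.aemeasurable hflt, integral_toReal hgm.aemeasurable hglt]

lemma iSup_min_natCast (a : ENNReal) : ⨆ m : ℕ, min a (m : ENNReal) = a := by
  apply le_antisymm (iSup_le fun m => min_le_left _ _)
  rcases eq_or_ne a ⊤ with rfl | ha
  · have : ∀ m : ℕ, min (⊤:ENNReal) (m:ENNReal) = (m:ENNReal) := fun m => min_eq_right le_top
    simp only [this]
    exact le_of_eq (ENNReal.iSup_natCast).symm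
  · obtain ⟨m, hm⟩ := ENNReal.exists_nat_gt (lt_top_iff_ne_top.2 ha).ne
    exact le_trans (le_of_eq (min_eq_left hm.le).symm) (le_iSup (fun m : ℕ => min a (m:ENNReal)) m)

end

/-- if `E log|φ₀ + b₀ ε₁| < 0` then for every `t` the series defining `S_t`
converges absolutely almost surely. -/
theorem bilinear_series_abs_converges_ae
    {Ω : Type*} [MeasurableSpace Ω] (P : Measure Ω) [IsProbabilityMeasure P]
    (ε : ℤ → Ω → ℝ) (μ₀ φ₀ b₀ σ₀sq : ℝ)
    (hmeas : ∀ t, Measurable (ε t))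
    (hindep : iIndepFun ε P)
    (hident : ∀ s t : ℤ, IdentDistrib (ε s) (ε t) P P)
    (hint : Integrable (ε 1) P) (hmean : ∫ ω, ε 1 ω ∂P = 0)
    (hsq : Integrable (fun ω => (ε 1 ω) ^ 2) P) (hvar : ∫ ω, (ε 1 ω) ^ 2 ∂P = σ₀sq)
    (hσ : 0 < σ₀sq)
    (hlog : elogAbs P (fun ω => φ₀ + b₀ * ε 1 ω) < 0) :
    ∀ t : ℤ, ∀ᵐ ω ∂P, Summable (fun j : ℕ => |blTerm μ₀ φ₀ b₀ ε t j ω|) := by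
  intro t
  have hintAll : ∀ s : ℤ, Integrable (ε s) P := fun s => (hident s 1).integrable_iff.2 hint
  set A1 : Ω → ℝ := fun ω => φ₀ + b₀ * ε 1 ω with hA1def
  have hA1m : Measurable A1 := measurable_const.add ((hmeas 1).const_mul b₀)
  have hA1int : Integrable A1 P := (integrable_const φ₀).add (hint.const_mul b₀)
  set PInt : ENNReal := ∫⁻ ω, logPlus |A1 ω| ∂P with hPIdef
  set NInt : ENNReal := ∫⁻ ω, logMinus |A1 ω| ∂P with hNIdef
  -- `PInt` is finite
  have hPne : PInt ≠ ⊤ := by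
    have hb : PInt ≤ ∫⁻ ω, ENNReal.ofReal |A1 ω| ∂P :=
      lintegral_mono fun ω => ENNReal.ofReal_le_ofReal (Real.log_le_self (abs_nonneg _))
    have he : ∫⁻ ω, ENNReal.ofReal |A1 ω| ∂P = ENNReal.ofReal (∫ ω, |A1 ω| ∂P) :=
      (ofReal_integral_eq_lintegral_ofReal hA1int.abs
        (ae_of_all _ fun ω => abs_nonneg _)).symm
    exact ne_top_of_le_ne_top (by rw [he]; exact ENNReal.ofReal_ne_top) hb
  -- from `hlog`, `PInt < NInt`
  have hPN : PInt < NInt := by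
    by_contra h
    push_neg at h
    have hcoele : (NInt : EReal) ≤ (PInt : EReal) := EReal.coe_ennreal_le_coe_ennreal_iff.2 h
    have hself : (PInt : EReal) - (PInt : EReal) = 0 := by
      have h1 : (PInt : EReal) ≠ ⊤ := by
        simpa [EReal.coe_ennreal_eq_top_iff] using hPne
      have h2 : (PInt : EReal) ≠ ⊥ := EReal.coe_ennreal_ne_bot _
      rw [← EReal.coe_toReal h1 h2, ← EReal.coe_sub]
      simp
    have h0 : (0 : EReal) ≤ (PInt : EReal) - (NInt : EReal) := by
      rw [← hself]; exact EReal.sub_le_sub le_rfl hcoele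
    have : (0 : EReal) < 0 := lt_of_le_of_lt h0 (by simpa [elogAbs] using hlog)
    exact absurd this (lt_irrefl _)
  -- choose the truncation level
  have hmono : Monotone fun m : ℕ => fun ω => min (logMinus |A1 ω|) (m : ENNReal) := by
    intro a b hab ω
    exact min_le_min le_rfl (by exact_mod_cast Nat.cast_le.2 hab)
  have hmm : ∀ m : ℕ, Measurable fun ω => min (logMinus |A1 ω|) (m : ENNReal) := fun m =>
    (measurable_logMinus.comp (measurable_abs.comp hA1m)).min measurable_const
  have hsupN : (⨆ m : ℕ, ∫⁻ ω, min (logMinus |A1 ω|) (m : ENNReal) ∂P) = NInt := by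
    rw [← lintegral_iSup hmm hmono]
    exact lintegral_congr fun ω => iSup_min_natCast _
  obtain ⟨m, hm⟩ : ∃ m : ℕ, PInt < ∫⁻ ω, min (logMinus |A1 ω|) (m : ENNReal) ∂P := by
    rw [← hsupN] at hPN
    exact lt_iSup_iff.1 hPN
  set M : ℝ := (m : ℝ) with hMdef
  have hM0 : (0 : ℝ) ≤ M := Nat.cast_nonneg m
  have hMcast : ENNReal.ofReal M = (m : ENNReal) := ENNReal.ofReal_natCast m
  -- the truncated log-moment is negative
  set c : ℝ := ∫ ω, blF M (A1 ω) ∂P with hcdef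
  have hc : c < 0 := by
    rw [hcdef, integral_blF_eq P hA1m hPne M]
    have hne2 : (∫⁻ ω, min (logMinus |A1 ω|) (ENNReal.ofReal M) ∂P) ≠ ⊤ :=
      lintegral_min_const_ne_top P M
    have hlt : PInt < ∫⁻ ω, min (logMinus |A1 ω|) (ENNReal.ofReal M) ∂P := by
      rw [hMcast]; exact hm
    have := (ENNReal.toReal_lt_toReal hPne hne2).2 hlt
    linarith
  -- the iid sequence for the SLLN
  set g : ℝ → ℝ := fun x => blF M (φ₀ + b₀ * x) with hgdef
  have hg : Measurable g :=
    (measurable_blF M).comp (measurable_const.add (measurable_id.const_mul b₀))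
  set X : ℕ → Ω → ℝ := fun r => g ∘ ε (t - 2 * (r : ℤ) - 1) with hXdef
  have hXident1 : ∀ r : ℕ, IdentDistrib (X r) (g ∘ ε 1) P P := fun r =>
    (hident (t - 2 * (r : ℤ) - 1) 1).comp hg
  have hXident : ∀ i, IdentDistrib (X i) (X 0) P P := fun i =>
    (hXident1 i).trans (hXident1 0).symm
  have hgint : Integrable (g ∘ ε 1) P := by
    refine Integrable.mono' (hA1int.abs.add (integrable_const M))
      ((hg.comp (hmeas 1)).aestronglyMeasurable) (ae_of_all _ fun ω => ?_)
    simpa using abs_blF_le hM0 (A1 ω)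
  have hXint : Integrable (X 0) P := (hXident1 0).integrable_iff.2 hgint
  have hEc : ∫ ω, X 0 ω ∂P = c := (hXident1 0).integral_eq
  have hpair : Pairwise (Function.onFun (IndepFun · · P) X) := by
    intro r s hrs
    have hne : (t - 2 * (r : ℤ) - 1) ≠ (t - 2 * (s : ℤ) - 1) := by
      intro h
      apply hrs
      have : (r : ℤ) = (s : ℤ) := by omega
      exact_mod_cast this
    exact (hindep.indepFun hne).comp hg hg
  have hslln := ProbabilityTheory.strong_law_ae X hXint hpair hXident
  -- Borel-Cantelli for the noise terms
  set δ : ℝ := -(c / 4) with hδdef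
  have hδpos : 0 < δ := by rw [hδdef]; linarith
  set C : ℝ := |μ₀| + ∫ ω, |ε 1 ω| ∂P with hCdef
  have hC0 : 0 ≤ C := by
    have : 0 ≤ ∫ ω, |ε 1 ω| ∂P := integral_nonneg fun ω => abs_nonneg _
    positivity
  set s : ℕ → Set Ω := fun j =>
    {ω | Real.exp (δ * ((j : ℝ) + 1)) ≤ |μ₀ + ε (t - 2 * ((j : ℤ) + 1)) ω|} with hsdef
  have hPsj : ∀ j : ℕ, P (s j) ≤ ENNReal.ofReal (C * Real.exp (-(δ * ((j : ℝ) + 1)))) := by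
    intro j
    set Z : Ω → ℝ := fun ω => |μ₀ + ε (t - 2 * ((j : ℤ) + 1)) ω| with hZdef
    have hZm : Measurable Z := (measurable_const.add (hmeas _)).abs
    have hZint : Integrable Z P := ((integrable_const μ₀).add (hintAll _)).abs
    have hZle : ∫ ω, Z ω ∂P ≤ C := by
      have h1 : ∀ ω, Z ω ≤ |μ₀| + |ε (t - 2 * ((j : ℤ) + 1)) ω| := fun ω => abs_add_le _ _
      have h2 : ∫ ω, (|μ₀| + |ε (t - 2 * ((j : ℤ) + 1)) ω|) ∂P
          = |μ₀| + ∫ ω, |ε (t - 2 * ((j : ℤ) + 1)) ω| ∂P := by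
        rw [integral_add (integrable_const _) (hintAll _).abs, integral_const]
        simp
      have h3 : ∫ ω, |ε (t - 2 * ((j : ℤ) + 1)) ω| ∂P = ∫ ω, |ε 1 ω| ∂P :=
        ((hident (t - 2 * ((j : ℤ) + 1)) 1).comp measurable_abs).integral_eq
      calc ∫ ω, Z ω ∂P ≤ ∫ ω, (|μ₀| + |ε (t - 2 * ((j : ℤ) + 1)) ω|) ∂P :=
            integral_mono hZint ((integrable_const _).add (hintAll _).abs) h1
        _ = C := by rw [h2, h3]
    set a : ENNReal := ENNReal.ofReal (Real.exp (δ * ((j : ℝ) + 1))) with hadef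
    have ha0 : a ≠ 0 := by
      simp [hadef, ENNReal.ofReal_eq_zero, not_le, Real.exp_pos]
    have hatop : a ≠ ⊤ := ENNReal.ofReal_ne_top
    have hseq : s j = {ω | a ≤ ENNReal.ofReal (Z ω)} := by
      ext ω
      simp only [hsdef, hadef, Set.mem_setOf_eq, hZdef]
      exact (ENNReal.ofReal_le_ofReal_iff (abs_nonneg _)).symm
    have hmarkov : P (s j) ≤ (∫⁻ ω, ENNReal.ofReal (Z ω) ∂P) / a := by
      rw [hseq]
      exact meas_ge_le_lintegral_div (hZm.ennreal_ofReal).aemeasurable ha0 hatop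
    have hlZ : ∫⁻ ω, ENNReal.ofReal (Z ω) ∂P = ENNReal.ofReal (∫ ω, Z ω ∂P) :=
      (ofReal_integral_eq_lintegral_ofReal hZint (ae_of_all _ fun ω => abs_nonneg _)).symm
    calc P (s j) ≤ (∫⁻ ω, ENNReal.ofReal (Z ω) ∂P) / a := hmarkov
      _ ≤ ENNReal.ofReal C / a := by
          rw [hlZ]
          exact ENNReal.div_le_div_right (ENNReal.ofReal_le_ofReal hZle) a
      _ = ENNReal.ofReal (C / Real.exp (δ * ((j : ℝ) + 1))) := by
          rw [ENNReal.ofReal_div_of_pos (Real.exp_pos _)]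
      _ = ENNReal.ofReal (C * Real.exp (-(δ * ((j : ℝ) + 1)))) := by
          rw [Real.exp_neg, div_eq_mul_inv]
  have hfsum : Summable fun j : ℕ => C * Real.exp (-(δ * ((j : ℝ) + 1))) := by
    have h1 : ∀ j : ℕ, Real.exp (-(δ * ((j : ℝ) + 1)))
        = Real.exp (-δ) * Real.exp (-δ) ^ j := by
      intro j
      rw [← Real.exp_nat_mul, ← Real.exp_add]
      congr 1
      push_cast
      ring
    simp only [h1]
    exact ((summable_geometric_of_lt_one (Real.exp_nonneg _)
      (Real.exp_lt_one_iff.2 (by linarith))).mul_left _).mul_left _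
  have hBC : ∀ᵐ ω ∂P, ∀ᶠ j in atTop, ω ∉ s j := by
    apply ae_eventually_notMem
    have h1 : (∑' j, P (s j)) ≤ ∑' j : ℕ, ENNReal.ofReal (C * Real.exp (-(δ * ((j : ℝ) + 1)))) :=
      ENNReal.tsum_le_tsum hPsj
    have h2 : (∑' j : ℕ, ENNReal.ofReal (C * Real.exp (-(δ * ((j : ℝ) + 1))))) ≠ ⊤ := by
      rw [← ENNReal.ofReal_tsum_of_nonneg (fun j => by positivity) hfsum]
      exact ENNReal.ofReal_ne_top
    exact ne_top_of_le_ne_top h2 h1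
  -- combine
  filter_upwards [hslln, hBC] with ω hω1 hω2
  have hc2 : c < c / 2 := by linarith
  have h1 : ∀ᶠ n : ℕ in atTop, (n : ℝ)⁻¹ * ∑ r ∈ Finset.range n, X r ω < c / 2 := by
    have := hω1.eventually_lt_const (by rw [hEc]; exact hc2)
    simpa [smul_eq_mul] using this
  obtain ⟨N1, hN1⟩ := eventually_atTop.1 h1
  obtain ⟨N2, hN2⟩ := eventually_atTop.1 hω2
  set q : ℝ := Real.exp (c / 4) with hqdef
  have hq0 : 0 ≤ q := Real.exp_nonneg _
  have hq1 : q < 1 := Real.exp_lt_one_iff.2 (by linarith)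
  set N : ℕ := max N1 N2 with hNdef
  have key : ∀ j : ℕ, N ≤ j → |blTerm μ₀ φ₀ b₀ ε t j ω| ≤ q ^ (j + 1) := by
    intro j hj
    have hj1 : N1 ≤ j + 1 := le_trans (le_trans (le_max_left _ _) hj) (Nat.le_succ j)
    have hj2 : N2 ≤ j := le_trans (le_max_right _ _) hj
    -- sum bound
    have hs1 : (↑(j + 1) : ℝ)⁻¹ * ∑ r ∈ Finset.range (j + 1), X r ω < c / 2 := hN1 (j + 1) hj1
    have hnpos : (0 : ℝ) < (↑(j + 1) : ℝ) := by positivity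
    have hsum : ∑ r ∈ Finset.range (j + 1), X r ω < c / 2 * (↑(j + 1) : ℝ) := by
      rw [inv_mul_eq_div] at hs1
      exact (div_lt_iff₀ hnpos).1 hs1
    -- product bound
    have hprod : |∏ r ∈ Finset.range (j + 1), (φ₀ + b₀ * ε (t - 2 * (r : ℤ) - 1) ω)|
        ≤ Real.exp (∑ r ∈ Finset.range (j + 1), X r ω) := by
      rw [Finset.abs_prod, Real.exp_sum]
      exact Finset.prod_le_prod (fun r _ => abs_nonneg _)
        (fun r _ => abs_le_exp_blF hM0 _)
    -- noise bound
    have hnoise : |μ₀ + ε (t - 2 * ((j : ℤ) + 1)) ω| < Real.exp (δ * ((j : ℝ) + 1)) := by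
      have := hN2 j hj2
      simp only [hsdef, Set.mem_setOf_eq, not_le] at this
      exact this
    have hnoise0 : 0 ≤ |μ₀ + ε (t - 2 * ((j : ℤ) + 1)) ω| := abs_nonneg _
    have hexp0 : (0:ℝ) < Real.exp (∑ r ∈ Finset.range (j + 1), X r ω) := Real.exp_pos _
    calc |blTerm μ₀ φ₀ b₀ ε t j ω|
        = |∏ r ∈ Finset.range (j + 1), (φ₀ + b₀ * ε (t - 2 * (r : ℤ) - 1) ω)|
            * |μ₀ + ε (t - 2 * ((j : ℤ) + 1)) ω| := abs_mul _ _
      _ ≤ Real.exp (∑ r ∈ Finset.range (j + 1), X r ω)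
            * Real.exp (δ * ((j : ℝ) + 1)) := by
          apply mul_le_mul hprod hnoise.le hnoise0 hexp0.le
      _ ≤ Real.exp (c / 2 * (↑(j + 1) : ℝ)) * Real.exp (δ * ((j : ℝ) + 1)) := by
          exact mul_le_mul_of_nonneg_right (Real.exp_le_exp.2 hsum.le) (Real.exp_pos _).le
      _ = q ^ (j + 1) := by
          rw [hqdef, ← Real.exp_nat_mul, ← Real.exp_add]
          congr 1
          push_cast [hδdef]
          ring
  rw [← summable_nat_add_iff N]
  refine Summable.of_nonneg_of_le (fun j => abs_nonneg _)
    (fun j => key (j + N) (Nat.le_add_left _ _)) ?_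
  have hpow : ∀ j : ℕ, q ^ (j + N + 1) = q ^ (N + 1) * q ^ j := by
    intro j
    rw [← pow_add]
    congr 1
    omega
  simp only [hpow]
  exact (summable_geometric_of_lt_one hq0 hq1).mul_left _
end

section
/- Suppose E ln|φ₀ + b₀ ε₁| < 0. Then the process (S_t)_{t∈ℤ} is strictly stationary: for every n ≥ 1, every t₁, …, t_n ∈ ℤ and every k ∈ ℤ, the random vectors (S_{t₁+k}, …, S_{t_n+k}) and (S_{t₁}, …, S_{t_n}) have the same distribution. Moreover, the law of the sequence (S_t)_{t∈ℤ} on ℝ^ℤ is invariant and ergodic with respect to the left shift. -/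
open MeasureTheory ProbabilityTheory Filter

noncomputable section

/-- The left shift on two-sided real sequences. -/
def leftShift : (ℤ → ℝ) → (ℤ → ℝ) := fun x t => x (t + 1)

open scoped ENNReal NNReal symmDiff


lemma measurable_tsum_real {α : Type*} [MeasurableSpace α] {f : ℕ → α → ℝ}
    (hf : ∀ n, Measurable (f n)) : Measurable (fun x => ∑' n, f n x) := by
  classical
  set F : α → ℝ≥0∞ := fun x => ∑' n, ENNReal.ofReal |f n x| with hF
  have hFmeas : Measurable F :=
    Measurable.ennreal_tsum fun n => (hf n).abs.ennreal_ofReal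
  have hSmeas : MeasurableSet {x | F x ≠ ∞} :=
    (hFmeas (measurableSet_singleton ∞)).compl
  have hsum_iff : ∀ x, Summable (fun n => f n x) ↔ F x ≠ ∞ := by
    intro x
    rw [← summable_abs_iff]
    have h1 : ∀ n, ENNReal.ofReal |f n x| = (((|f n x|).toNNReal : ℝ≥0) : ℝ≥0∞) :=
      fun n => rfl
    have h2 : ∀ n, (((|f n x|).toNNReal : ℝ≥0) : ℝ) = |f n x| :=
      fun n => Real.coe_toNNReal _ (abs_nonneg _)
    rw [hF]
    simp only [h1, ENNReal.tsum_coe_ne_top_iff_summable, ← NNReal.summable_coe, h2]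
  have key : (fun x => ∑' n, f n x) = Set.indicator {x | F x ≠ ∞}
      (fun x => (∑' n, ENNReal.ofReal (f n x)).toReal
        - (∑' n, ENNReal.ofReal (-(f n x))).toReal) := by
    funext x
    by_cases hx : Summable (fun n => f n x)
    · rw [Set.indicator_of_mem (by exact (hsum_iff x).1 hx)]
      set p : ℕ → ℝ := fun n => max (f n x) 0
      set q : ℕ → ℝ := fun n => max (-(f n x)) 0
      have hple : ∀ n, p n ≤ |f n x| := fun n => by
        simp [p, abs_nonneg, le_abs_self, abs_nonneg _]
      have hqle : ∀ n, q n ≤ |f n x| := fun n => by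
        simp only [q, max_le_iff]
        exact ⟨neg_le_abs _, abs_nonneg _⟩
      have hp : Summable p :=
        (hx.abs).of_nonneg_of_le (fun n => le_max_right _ _) hple
      have hq : Summable q :=
        (hx.abs).of_nonneg_of_le (fun n => le_max_right _ _) hqle
      have h1 : (∑' n, ENNReal.ofReal (f n x)) = ENNReal.ofReal (∑' n, p n) := by
        rw [ENNReal.ofReal_tsum_of_nonneg (fun n => le_max_right _ _) hp]
        congr 1; funext n
        rcases le_total (f n x) 0 with h | h
        · rw [ENNReal.ofReal_of_nonpos h, max_eq_right h, ENNReal.ofReal_zero]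
        · rw [max_eq_left h]
      have h2 : (∑' n, ENNReal.ofReal (-(f n x))) = ENNReal.ofReal (∑' n, q n) := by
        rw [ENNReal.ofReal_tsum_of_nonneg (fun n => le_max_right _ _) hq]
        congr 1; funext n
        rcases le_total (f n x) 0 with h | h
        · rw [max_eq_left (by linarith)]
        · rw [ENNReal.ofReal_of_nonpos (by linarith), max_eq_right (by linarith),
            ENNReal.ofReal_zero]
      rw [h1, h2, ENNReal.toReal_ofReal (tsum_nonneg fun n => le_max_right _ _),
        ENNReal.toReal_ofReal (tsum_nonneg fun n => le_max_right _ _), ← Summable.tsum_sub hp hq]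
      congr 1; funext n
      exact (max_zero_sub_max_neg_zero_eq_self _).symm
    · rw [Set.indicator_of_notMem (by simpa using (not_iff_not.2 (hsum_iff x)).1 hx),
        tsum_eq_zero_of_not_summable hx]
  rw [key]
  exact Measurable.indicator
    ((Measurable.ennreal_tsum fun n => (hf n).ennreal_ofReal).ennreal_toReal.sub
      ((Measurable.ennreal_tsum fun n => (hf n).neg.ennreal_ofReal).ennreal_toReal)) hSmeas


def shiftk (k : ℤ) : (ℤ → ℝ) → (ℤ → ℝ) := fun x t => x (t + k)

lemma measurable_shiftk (k : ℤ) : Measurable (shiftk k) :=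
  measurable_pi_lambda _ fun t => measurable_pi_apply _

section iid
variable {Ω : Type*} [MeasurableSpace Ω] {P : Measure Ω} [IsProbabilityMeasure P]
variable {ε : ℤ → Ω → ℝ}

lemma lawtuple (hmeas : ∀ t, Measurable (ε t))
    (hindep : iIndepFun ε P)
    (hident : ∀ s t : ℤ, IdentDistrib (ε s) (ε t) P P)
    (k : ℤ) (s : Finset ℤ) :
    P.map (fun ω (i : s) => ε ((i : ℤ) + k) ω) = Measure.pi (fun _ : s => P.map (ε 1)) := by
  classical
  have htuple_meas : Measurable (fun ω (i : s) => ε ((i : ℤ) + k) ω) :=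
    measurable_pi_lambda _ fun i => hmeas _
  refine (Measure.pi_eq fun A hA => ?_).symm
  rw [Measure.map_apply htuple_meas (MeasurableSet.univ_pi hA)]
  -- the preimage is an intersection over the finset
  set t : Finset ℤ := s.image (fun i => i + k) with ht
  set sets : ℤ → Set ℝ := fun j => if h : j - k ∈ s then A ⟨j - k, h⟩ else Set.univ with hsets
  have hpre : (fun ω (i : s) => ε ((i : ℤ) + k) ω) ⁻¹' (Set.pi Set.univ A)
      = ⋂ j ∈ t, ε j ⁻¹' sets j := by
    ext ω
    simp only [Set.mem_preimage, Set.mem_pi, Set.mem_univ, forall_true_left, Set.mem_iInter,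
      ht, Finset.mem_image, hsets]
    constructor
    · rintro h j ⟨i, hi, rfl⟩
      have h1 : (i : ℤ) + k - k ∈ s := by simpa using hi
      rw [dif_pos h1]
      have : (⟨i + k - k, h1⟩ : s) = ⟨i, hi⟩ := by
        ext; ring
      rw [this]
      exact h ⟨i, hi⟩
    · intro h i
      have := h ((i : ℤ) + k) ⟨i, i.2, rfl⟩
      have h1 : (i : ℤ) + k - k ∈ s := by simpa using i.2
      rw [dif_pos h1] at this
      have h2 : (⟨(i : ℤ) + k - k, h1⟩ : s) = i := by
        ext; ring
      rwa [h2] at this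
  rw [hpre]
  have hsets_meas : ∀ j ∈ t, MeasurableSet (sets j) := by
    intro j hj
    by_cases h : j - k ∈ s
    · rw [hsets]; simp only [dif_pos h]; exact hA _
    · rw [hsets]; simp only [dif_neg h]; exact MeasurableSet.univ
  rw [hindep.measure_inter_preimage_eq_mul t hsets_meas]
  have hnu : ∀ j : ℤ, ∀ B : Set ℝ, MeasurableSet B → P (ε j ⁻¹' B) = (P.map (ε 1)) B := by
    intro j B hB
    rw [← (hident j 1).map_eq, Measure.map_apply (hmeas j) hB]
  calc ∏ j ∈ t, P (ε j ⁻¹' sets j)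
      = ∏ i ∈ s, P (ε (i + k) ⁻¹' sets (i + k)) := by
        rw [ht, Finset.prod_image]
        intro a _ b _ hab
        simp only at hab
        omega
    _ = ∏ i ∈ s.attach, P (ε ((i : ℤ) + k) ⁻¹' sets ((i : ℤ) + k)) := by
        rw [← Finset.prod_attach s (fun i => P (ε (i + k) ⁻¹' sets (i + k)))]
    _ = ∏ i : s, (P.map (ε 1)) (A i) := by
        refine Finset.prod_congr rfl (fun i _ => ?_)
        have h1 : (i : ℤ) + k - k ∈ s := by simpa using i.2
        have h2 : sets ((i : ℤ) + k) = A i := by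
          rw [hsets]
          simp only [dif_pos h1]
          congr 1
          ext; ring
        rw [h2, hnu _ _ (hA i)]

lemma measurable_seqMap (hmeas : ∀ t, Measurable (ε t)) :
    Measurable (fun ω (t : ℤ) => ε t ω) :=
  measurable_pi_lambda _ fun t => hmeas t

lemma map_shiftk_seq (hmeas : ∀ t, Measurable (ε t))
    (hindep : iIndepFun ε P)
    (hident : ∀ s t : ℤ, IdentDistrib (ε s) (ε t) P P) (k : ℤ) :
    (P.map (fun ω (t : ℤ) => ε t ω)).map (shiftk k) = P.map (fun ω (t : ℤ) => ε t ω) := by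
  have hseq := measurable_seqMap hmeas
  rw [Measure.map_map (measurable_shiftk k) hseq]
  have hcomp : ∀ m : ℤ, (fun ω (t : ℤ) => ε (t + m) ω)
      = shiftk m ∘ (fun ω (t : ℤ) => ε t ω) := fun m => rfl
  have key : ∀ m : ℤ, P.map (fun ω (t : ℤ) => ε (t + m) ω)
      = P.map (fun ω (t : ℤ) => ε (t + 0) ω) := by
    intro m
    have hm : Measurable (fun ω (t : ℤ) => ε (t + m) ω) :=
      measurable_pi_lambda _ fun t => hmeas _
    have h0 : Measurable (fun ω (t : ℤ) => ε (t + 0) ω) :=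
      measurable_pi_lambda _ fun t => hmeas _
    refine ext_of_generate_finite (measurableCylinders (fun _ : ℤ => ℝ))
      generateFrom_measurableCylinders.symm isPiSystem_measurableCylinders
      (fun c hc => ?_) ?_
    · obtain ⟨s, S, hS, rfl⟩ := (mem_measurableCylinders (α := fun _ : ℤ => ℝ) c).1 hc
      have hmc : MeasurableSet (cylinder s S) := MeasurableSet.cylinder (α := fun _ : ℤ => ℝ) s hS
      rw [Measure.map_apply hm hmc, Measure.map_apply h0 hmc]
      have hpre : ∀ m : ℤ, (fun ω (t : ℤ) => ε (t + m) ω) ⁻¹' (cylinder s S)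
          = (fun ω (i : s) => ε ((i : ℤ) + m) ω) ⁻¹' S := by
        intro m; ext ω
        simp only [Set.mem_preimage, mem_cylinder]
        rfl
      have htm : Measurable (fun ω (i : s) => ε ((i : ℤ) + m) ω) :=
        measurable_pi_lambda _ fun i => hmeas _
      have ht0 : Measurable (fun ω (i : s) => ε ((i : ℤ) + 0) ω) :=
        measurable_pi_lambda _ fun i => hmeas _
      rw [hpre m, hpre 0, ← Measure.map_apply htm hS, ← Measure.map_apply ht0 hS,
        lawtuple hmeas hindep hident m s, lawtuple hmeas hindep hident 0 s]
    · have : IsProbabilityMeasure (P.map (fun ω (t : ℤ) => ε (t + m) ω)) :=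
        Measure.isProbabilityMeasure_map hm.aemeasurable
      have : IsProbabilityMeasure (P.map (fun ω (t : ℤ) => ε (t + 0) ω)) :=
        Measure.isProbabilityMeasure_map h0.aemeasurable
      simp only [measure_univ]
  rw [← hcomp k]
  have h2 := key k
  simpa using h2

open scoped symmDiff

lemma abs_toReal_sub_le {α : Type*} [MeasurableSpace α] (μ : Measure α) [IsFiniteMeasure μ]
    (U V : Set α) : |(μ U).toReal - (μ V).toReal| ≤ (μ (U ∆ V)).toReal := by
  have hsub : ∀ X Y : Set α, X ⊆ Y ∪ (X ∆ Y) := by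
    intro X Y x hx
    by_cases h : x ∈ Y
    · exact Or.inl h
    · exact Or.inr (by simp [Set.mem_symmDiff]; tauto)
  have hle : ∀ X Y : Set α, (μ X).toReal ≤ (μ Y).toReal + (μ (X ∆ Y)).toReal := by
    intro X Y
    have h1 : μ X ≤ μ Y + μ (X ∆ Y) :=
      le_trans (measure_mono (hsub X Y)) (measure_union_le _ _)
    have h2 := ENNReal.toReal_mono (by finiteness) h1
    rwa [ENNReal.toReal_add (measure_ne_top _ _) (measure_ne_top _ _)] at h2
  rw [abs_sub_le_iff]
  constructor
  · have := hle U V; linarith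
  · have := hle V U; rw [symmDiff_comm] at this; linarith

lemma toReal_prob_le_one {α : Type*} [MeasurableSpace α] (μ : Measure α)
    [IsProbabilityMeasure μ] (U : Set α) : (μ U).toReal ≤ 1 := by
  have h := prob_le_one (μ := μ) (s := U)
  have := ENNReal.toReal_mono ENNReal.one_ne_top h
  simpa using this

theorem leftShift_eq_shiftk : leftShift = shiftk 1 := rfl

lemma iterate_leftShift (n : ℕ) : leftShift^[n] = shiftk (n : ℤ) := by
  induction n with
  | zero => funext x t; simp [shiftk]
  | succ n ih =>
    rw [Function.iterate_succ', ih]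
    funext x t
    simp only [Function.comp_apply, shiftk, leftShift]
    congr 1
    push_cast
    ring

lemma ergodic_shift_seq (hmeas : ∀ t, Measurable (ε t))
    (hindep : iIndepFun ε P)
    (hident : ∀ s t : ℤ, IdentDistrib (ε s) (ε t) P P) :
    Ergodic leftShift (P.map (fun ω (t : ℤ) => ε t ω)) := by
  classical
  have hseq := measurable_seqMap (ε := ε) hmeas
  set ξ : Measure (ℤ → ℝ) := P.map (fun ω (t : ℤ) => ε t ω) with hξ
  have hprob : IsProbabilityMeasure ξ := Measure.isProbabilityMeasure_map hseq.aemeasurable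
  have hinv : ∀ k : ℤ, ξ.map (shiftk k) = ξ := fun k => map_shiftk_seq hmeas hindep hident k
  have hMP : MeasurePreserving leftShift ξ ξ := ⟨measurable_shiftk 1, hinv 1⟩
  refine ⟨hMP, ?_⟩
  constructor
  intro A hA hAinv
  rw [Filter.eventuallyConst_set']
  -- reduce to measure statement
  suffices hkey : ξ A = 0 ∨ ξ Aᶜ = 0 by
    rcases hkey with h | h
    · exact Or.inl (ae_eq_empty.2 h)
    · exact Or.inr (ae_eq_univ.2 h)
  -- measure-dense approximation by cylinders
  have halg : IsSetAlgebra (measurableCylinders (fun _ : ℤ => ℝ)) :=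
    ⟨empty_mem_measurableCylinders _, fun _ hs => compl_mem_measurableCylinders hs,
      fun _ _ hs ht => union_mem_measurableCylinders hs ht⟩
  have hdense : ξ.MeasureDense (measurableCylinders (fun _ : ℤ => ℝ)) :=
    Measure.MeasureDense.of_generateFrom_isSetAlgebra_finite ξ halg
      generateFrom_measurableCylinders.symm
  set a : ℝ := (ξ A).toReal with ha
  have hkey : ∀ εr : ℝ, 0 < εr → |a - a ^ 2| ≤ 4 * εr := by
    intro εr hεr
    obtain ⟨B, hBmem, hABlt⟩ := hdense.approx A hA (measure_ne_top _ _) εr hεr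
    obtain ⟨s, S, hS, rfl⟩ := (mem_measurableCylinders (α := fun _ : ℤ => ℝ) _).1 hBmem
    set B : Set (ℤ → ℝ) := cylinder s S with hB
    have hBmeas : MeasurableSet B := MeasurableSet.cylinder (α := fun _ : ℤ => ℝ) s hS
    -- choose the gap n
    set M : ℕ := s.sup (fun i => i.natAbs) with hM
    set n : ℕ := 2 * M + 1 with hn
    have hgap : ∀ i ∈ s, i + (n : ℤ) ∉ s := by
      intro i hi hcon
      have h1 : (i + (n : ℤ)).natAbs ≤ M := Finset.le_sup (f := fun i : ℤ => i.natAbs) hcon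
      have h2 : i.natAbs ≤ M := Finset.le_sup (f := fun i : ℤ => i.natAbs) hi
      omega
    -- invariance of A under shiftk n
    have hAn : shiftk (n : ℤ) ⁻¹' A = A := by
      rw [← iterate_leftShift n]
      exact Function.IsFixedPt.preimage_iterate hAinv n
    -- independence computation: ξ (B ∩ shiftk n ⁻¹' B) = ξ B * ξ B
    set t' : Finset ℤ := s.image (fun i => i + (n : ℤ)) with ht'
    have hdisj : Disjoint s t' := by
      rw [Finset.disjoint_left]
      intro j hj hj'
      rw [ht', Finset.mem_image] at hj'
      obtain ⟨i, hi, rfl⟩ := hj'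
      exact hgap i hi hj
    have hIndep : IndepFun (fun ω (i : s) => ε i ω) (fun ω (j : t') => ε j ω) P :=
      hindep.indepFun_finset s t' hdisj hmeas
    have hr : ∀ i : s, (i : ℤ) + (n : ℤ) ∈ t' := by
      intro i; rw [ht', Finset.mem_image]; exact ⟨i, i.2, rfl⟩
    set r : ((j : t') → ℝ) → ((i : s) → ℝ) := fun y i => y ⟨(i : ℤ) + (n : ℤ), hr i⟩ with hrdef
    have hrmeas : Measurable r :=
      measurable_pi_lambda _ fun i => measurable_pi_apply _
    have hIndep2 : IndepFun (fun ω (i : s) => ε i ω)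
        (fun ω (i : s) => ε ((i : ℤ) + (n : ℤ)) ω) P := by
      have := hIndep.comp measurable_id hrmeas
      exact this
    have hmul := (indepFun_iff_measure_inter_preimage_eq_mul.1 hIndep2) S S hS hS
    -- translate to ξ
    have hpre0 : (fun ω (t : ℤ) => ε t ω) ⁻¹' B = (fun ω (i : s) => ε i ω) ⁻¹' S := rfl
    have hpren : (fun ω (t : ℤ) => ε t ω) ⁻¹' (shiftk (n : ℤ) ⁻¹' B)
        = (fun ω (i : s) => ε ((i : ℤ) + (n : ℤ)) ω) ⁻¹' S := rfl
    have hBn_meas : MeasurableSet (shiftk (n : ℤ) ⁻¹' B) := (measurable_shiftk _) hBmeas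
    have hxiBn : ξ (shiftk (n : ℤ) ⁻¹' B) = ξ B := by
      conv_rhs => rw [← hinv (n : ℤ)]
      rw [Measure.map_apply (measurable_shiftk _) hBmeas]
    have hxi_inter : ξ (B ∩ shiftk (n : ℤ) ⁻¹' B) = ξ B * ξ B := by
      rw [hξ, Measure.map_apply hseq (hBmeas.inter hBn_meas), Set.preimage_inter, hpre0, hpren,
        hmul, ← hpre0, ← hpren, ← Measure.map_apply hseq hBmeas,
        ← Measure.map_apply hseq hBn_meas, ← hξ, hxiBn]
    -- arithmetic
    set b : ℝ := (ξ B).toReal with hbdef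
    have hd : (ξ (A ∆ B)).toReal < εr := by
      have h1 : ξ (A ∆ B) ≠ ∞ := measure_ne_top _ _
      have := ENNReal.toReal_lt_toReal h1 ENNReal.ofReal_ne_top |>.2 hABlt
      rwa [ENNReal.toReal_ofReal hεr.le] at this
    have hAeq : ξ A = ξ (A ∩ shiftk (n : ℤ) ⁻¹' A) := by rw [hAn, Set.inter_self]
    have hsymm_sub : ξ ((A ∩ shiftk (n : ℤ) ⁻¹' A) ∆ (B ∩ shiftk (n : ℤ) ⁻¹' B))
        ≤ ξ (A ∆ B) + ξ ((shiftk (n : ℤ) ⁻¹' A) ∆ (shiftk (n : ℤ) ⁻¹' B)) := by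
      refine le_trans (measure_mono ?_) (measure_union_le _ _)
      intro x
      simp only [Set.mem_symmDiff, Set.mem_inter_iff, Set.mem_union]
      tauto
    have hpre_symm : ξ ((shiftk (n : ℤ) ⁻¹' A) ∆ (shiftk (n : ℤ) ⁻¹' B)) = ξ (A ∆ B) := by
      rw [← Set.preimage_symmDiff]
      conv_rhs => rw [← hinv (n : ℤ)]
      rw [Measure.map_apply (measurable_shiftk _) ((hA.symmDiff hBmeas))]
    have h2d : ξ ((A ∩ shiftk (n : ℤ) ⁻¹' A) ∆ (B ∩ shiftk (n : ℤ) ⁻¹' B))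
        ≤ ξ (A ∆ B) + ξ (A ∆ B) := le_trans hsymm_sub (by rw [hpre_symm])
    have habs1 : |a - b * b| ≤ 2 * εr := by
      have h1 := abs_toReal_sub_le ξ (A ∩ shiftk (n : ℤ) ⁻¹' A) (B ∩ shiftk (n : ℤ) ⁻¹' B)
      have h2 : (ξ ((A ∩ shiftk (n : ℤ) ⁻¹' A) ∆ (B ∩ shiftk (n : ℤ) ⁻¹' B))).toReal
          ≤ (ξ (A ∆ B)).toReal + (ξ (A ∆ B)).toReal := by
        have := ENNReal.toReal_mono (by finiteness) h2d
        rwa [ENNReal.toReal_add (measure_ne_top _ _) (measure_ne_top _ _)] at this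
      have h3 : (ξ (A ∩ shiftk (n : ℤ) ⁻¹' A)).toReal = a := by rw [ha, hAeq]
      have h4 : (ξ (B ∩ shiftk (n : ℤ) ⁻¹' B)).toReal = b * b := by
        rw [hxi_inter, ENNReal.toReal_mul, ← hbdef]
      rw [h3, h4] at h1
      linarith
    have habs2 : |a - b| ≤ εr := by
      have h1 := abs_toReal_sub_le ξ A B
      rw [← ha, ← hbdef] at h1
      linarith
    have ha1 : a ≤ 1 := toReal_prob_le_one ξ A
    have hb1 : b ≤ 1 := toReal_prob_le_one ξ B
    have ha0 : 0 ≤ a := ENNReal.toReal_nonneg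
    have hb0 : 0 ≤ b := ENNReal.toReal_nonneg
    have habs3 : |b * b - a ^ 2| ≤ 2 * εr := by
      have : |b * b - a ^ 2| = |b + a| * |b - a| := by
        rw [← abs_mul]; ring_nf
      rw [this]
      have h1 : |b + a| ≤ 2 := by rw [abs_of_nonneg (by linarith)]; linarith
      have h2 : |b - a| ≤ εr := by rw [abs_sub_comm]; exact habs2
      have := mul_le_mul h1 h2 (abs_nonneg _) (by norm_num : (0:ℝ) ≤ 2)
      linarith
    calc |a - a ^ 2| ≤ |a - b * b| + |b * b - a ^ 2| := abs_sub_le _ _ _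
      _ ≤ 4 * εr := by linarith
  -- conclude a = a^2
  have haa : a = a ^ 2 := by
    by_contra hne
    have hpos : 0 < |a - a ^ 2| := abs_pos.2 (sub_ne_zero.2 hne)
    have := hkey (|a - a ^ 2| / 8) (by linarith)
    linarith [abs_nonneg (a - a ^ 2)]
  have ha0 : 0 ≤ a := ENNReal.toReal_nonneg
  have h01 : a = 0 ∨ a = 1 := by
    rcases mul_eq_zero.1 (show a * (1 - a) = 0 by nlinarith) with h | h
    · exact Or.inl h
    · exact Or.inr (by linarith)
  rcases h01 with h | h
  · left
    have := ENNReal.toReal_eq_zero_iff (ξ A)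
    rcases this.1 h with h' | h'
    · exact h'
    · exact absurd h' (measure_ne_top _ _)
  · right
    have hA1 : ξ A = 1 := by
      rw [← ENNReal.ofReal_toReal (measure_ne_top ξ A), ← ha, h, ENNReal.ofReal_one]
    rw [measure_compl hA (measure_ne_top _ _), measure_univ, hA1, tsub_self]

end iid


def blPhi (μ₀ φ₀ b₀ : ℝ) : (ℤ → ℝ) → (ℤ → ℝ) := fun x t =>
  μ₀ + x t + ∑' j : ℕ,
    (∏ r ∈ Finset.range (j + 1), (φ₀ + b₀ * x (t - 2 * (r : ℤ) - 1))) *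
      (μ₀ + x (t - 2 * ((j : ℤ) + 1)))

lemma blS_eq_blPhi {Ω : Type*} (μ₀ φ₀ b₀ : ℝ) (ε : ℤ → Ω → ℝ) :
    (fun ω (t : ℤ) => blS μ₀ φ₀ b₀ ε t ω) = blPhi μ₀ φ₀ b₀ ∘ (fun ω (t : ℤ) => ε t ω) := rfl

lemma measurable_blPhi (μ₀ φ₀ b₀ : ℝ) : Measurable (blPhi μ₀ φ₀ b₀) := by
  refine measurable_pi_lambda _ fun t => ?_
  refine (measurable_const.add (measurable_pi_apply t)).add ?_
  refine measurable_tsum_real fun j => ?_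
  have h1 : Measurable fun x : ℤ → ℝ =>
      ∏ r ∈ Finset.range (j + 1), (φ₀ + b₀ * x (t - 2 * (r : ℤ) - 1)) :=
    Finset.measurable_prod _ fun r _ =>
      measurable_const.add (measurable_const.mul (measurable_pi_apply _))
  have h2 : Measurable fun x : ℤ → ℝ => μ₀ + x (t - 2 * ((j : ℤ) + 1)) :=
    measurable_const.add (measurable_pi_apply _)
  exact h1.mul h2

lemma blPhi_comm_shiftk (μ₀ φ₀ b₀ : ℝ) (k : ℤ) :
    blPhi μ₀ φ₀ b₀ ∘ shiftk k = shiftk k ∘ blPhi μ₀ φ₀ b₀ := by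
  funext x t
  simp only [Function.comp_apply, shiftk, blPhi, sub_add_eq_add_sub]

/-- if `E log|φ₀ + b₀ ε₁| < 0` then `(S_t)` is strictly stationary, and the law
of the sequence `(S_t)_{t∈ℤ}` on `ℝ^ℤ` is invariant and ergodic for the left shift. -/
theorem bilinear_S_strictly_stationary_ergodic
    {Ω : Type*} [MeasurableSpace Ω] (P : Measure Ω) [IsProbabilityMeasure P]
    (ε : ℤ → Ω → ℝ) (μ₀ φ₀ b₀ σ₀sq : ℝ)
    (hmeas : ∀ t, Measurable (ε t))
    (hindep : iIndepFun ε P)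
    (hident : ∀ s t : ℤ, IdentDistrib (ε s) (ε t) P P)
    (hint : Integrable (ε 1) P) (hmean : ∫ ω, ε 1 ω ∂P = 0)
    (hsq : Integrable (fun ω => (ε 1 ω) ^ 2) P) (hvar : ∫ ω, (ε 1 ω) ^ 2 ∂P = σ₀sq)
    (hσ : 0 < σ₀sq)
    (hlog : elogAbs P (fun ω => φ₀ + b₀ * ε 1 ω) < 0) :
    (∀ (n : ℕ) (ts : Fin n → ℤ) (k : ℤ),
      IdentDistrib (fun ω (i : Fin n) => blS μ₀ φ₀ b₀ ε (ts i + k) ω)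
        (fun ω (i : Fin n) => blS μ₀ φ₀ b₀ ε (ts i) ω) P P) ∧
    Ergodic leftShift (P.map (fun ω (t : ℤ) => blS μ₀ φ₀ b₀ ε t ω)) := by
  classical
  have hseq : Measurable (fun ω (t : ℤ) => ε t ω) := measurable_seqMap hmeas
  have hΦ : Measurable (blPhi μ₀ φ₀ b₀) := measurable_blPhi μ₀ φ₀ b₀
  have hΦseq : Measurable (blPhi μ₀ φ₀ b₀ ∘ fun ω (t : ℤ) => ε t ω) := hΦ.comp hseq
  have hξk : ∀ k : ℤ, (P.map (fun ω (t : ℤ) => ε t ω)).map (shiftk k)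
      = P.map (fun ω (t : ℤ) => ε t ω) := fun k => map_shiftk_seq hmeas hindep hident k
  have hμ'inv : ∀ k : ℤ,
      (P.map (blPhi μ₀ φ₀ b₀ ∘ fun ω (t : ℤ) => ε t ω)).map (shiftk k)
      = P.map (blPhi μ₀ φ₀ b₀ ∘ fun ω (t : ℤ) => ε t ω) := by
    intro k
    rw [← Measure.map_map hΦ hseq, Measure.map_map (measurable_shiftk k) hΦ,
      ← blPhi_comm_shiftk μ₀ φ₀ b₀ k, ← Measure.map_map hΦ (measurable_shiftk k),
      hξk k, Measure.map_map hΦ hseq]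
  constructor
  · -- strict stationarity
    intro n ts k
    have hF : Measurable (fun x : ℤ → ℝ => fun i : Fin n => x (ts i)) :=
      measurable_pi_lambda _ fun i => measurable_pi_apply _
    have hG : Measurable (shiftk k ∘ blPhi μ₀ φ₀ b₀ ∘ fun ω (t : ℤ) => ε t ω) :=
      (measurable_shiftk k).comp hΦseq
    have e1 : (fun ω (i : Fin n) => blS μ₀ φ₀ b₀ ε (ts i + k) ω)
        = (fun x : ℤ → ℝ => fun i : Fin n => x (ts i))
          ∘ (shiftk k ∘ blPhi μ₀ φ₀ b₀ ∘ fun ω (t : ℤ) => ε t ω) := rfl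
    have e2 : (fun ω (i : Fin n) => blS μ₀ φ₀ b₀ ε (ts i) ω)
        = (fun x : ℤ → ℝ => fun i : Fin n => x (ts i))
          ∘ (blPhi μ₀ φ₀ b₀ ∘ fun ω (t : ℤ) => ε t ω) := rfl
    refine ⟨(hF.comp hG).aemeasurable, (hF.comp hΦseq).aemeasurable, ?_⟩
    rw [e1, e2, ← Measure.map_map hF hG, ← Measure.map_map hF hΦseq]
    congr 1
    rw [← Measure.map_map (measurable_shiftk k) hΦseq]
    exact hμ'inv k
  · -- ergodicity
    have hErg : Ergodic leftShift (P.map (fun ω (t : ℤ) => ε t ω)) :=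
      ergodic_shift_seq hmeas hindep hident
    rw [blS_eq_blPhi μ₀ φ₀ b₀ ε]
    constructor
    · -- measure preserving
      refine ⟨measurable_shiftk 1, ?_⟩
      exact hμ'inv 1
    · -- pre-ergodic
      constructor
      intro A hA hAinv
      rw [Filter.eventuallyConst_set']
      have hinvpre : leftShift ⁻¹' (blPhi μ₀ φ₀ b₀ ⁻¹' A) = blPhi μ₀ φ₀ b₀ ⁻¹' A := by
        have : blPhi μ₀ φ₀ b₀ ∘ leftShift = leftShift ∘ blPhi μ₀ φ₀ b₀ :=
          blPhi_comm_shiftk μ₀ φ₀ b₀ 1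
        calc leftShift ⁻¹' (blPhi μ₀ φ₀ b₀ ⁻¹' A)
            = (blPhi μ₀ φ₀ b₀ ∘ leftShift) ⁻¹' A := rfl
          _ = (leftShift ∘ blPhi μ₀ φ₀ b₀) ⁻¹' A := by rw [this]
          _ = blPhi μ₀ φ₀ b₀ ⁻¹' (leftShift ⁻¹' A) := rfl
          _ = blPhi μ₀ φ₀ b₀ ⁻¹' A := by rw [hAinv]
      have h01 := hErg.toPreErgodic.measure_self_or_compl_eq_zero (hΦ hA) hinvpre
      have hmap : ∀ B : Set (ℤ → ℝ), MeasurableSet B →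
          (P.map (blPhi μ₀ φ₀ b₀ ∘ fun ω (t : ℤ) => ε t ω)) B
          = (P.map (fun ω (t : ℤ) => ε t ω)) (blPhi μ₀ φ₀ b₀ ⁻¹' B) := by
        intro B hB
        rw [← Measure.map_map hΦ hseq, Measure.map_apply hΦ hB]
      rcases h01 with h | h
      · exact Or.inl (ae_eq_empty.2 (by rw [hmap A hA]; exact h))
      · refine Or.inr (ae_eq_univ.2 ?_)
        rw [hmap Aᶜ hA.compl, Set.preimage_compl]
        exact h
end
end

section
/- Suppose E ln|φ₀ + b₀ ε₁| < 0, and let (Y_t)_{t∈ℤ} be any strictly stationary process of real random variables on the same probability space such that for every t ∈ ℤ, almost surely Y_t = μ₀ + φ₀ Y_{t−2} + b₀ Y_{t−2} ε_{t−1} + ε_t. Then for every t ∈ ℤ, Y_t = S_t almost surely; that is, (S_t) is the unique strictly stationary solution of the bilinear recursion. -/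
open MeasureTheory ProbabilityTheory Filter
open scoped ENNReal NNReal Topology

noncomputable section

/-- truncated log with convention `trLog M 0 = -M` -/
def trLog (M x : ℝ) : ℝ := if x = 0 then -M else max (Real.log |x|) (-M)

lemma measurable_trLog (M : ℝ) : Measurable (trLog M) := by
  unfold trLog
  exact Measurable.ite (by simp) measurable_const
    ((Real.measurable_log.comp measurable_abs).max measurable_const)

lemma abs_le_exp_trLog (M x : ℝ) : |x| ≤ Real.exp (trLog M x) := by
  unfold trLog
  by_cases h : x = 0
  · simp only [h, abs_zero, if_true, eq_self_iff_true]
    exact (Real.exp_pos _).le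
  · rw [if_neg h]
    calc |x| = Real.exp (Real.log |x|) := (Real.exp_log (abs_pos.2 h)).symm
    _ ≤ _ := Real.exp_le_exp.2 (le_max_left _ _)

lemma abs_trLog_le (M x : ℝ) (hM : 0 ≤ M) : |trLog M x| ≤ M + |x| := by
  unfold trLog
  by_cases h : x = 0
  · simp only [h, eq_self_iff_true, if_true, abs_neg, abs_of_nonneg hM, abs_zero]
    linarith
  · rw [if_neg h, abs_le]
    constructor
    · calc -(M + |x|) ≤ -M := by simp [abs_nonneg]
      _ ≤ _ := le_max_right _ _
    · refine max_le ?_ (by have := abs_nonneg x; linarith)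
      calc Real.log |x| ≤ |x| - 1 := Real.log_le_sub_one_of_pos (abs_pos.2 h)
      _ ≤ M + |x| := by linarith

lemma monotone_ofReal : Monotone ENNReal.ofReal := fun _ _ h => ENNReal.ofReal_le_ofReal h

lemma exists_good_trunc {Ω : Type*} [MeasurableSpace Ω] (P : Measure Ω) [IsProbabilityMeasure P]
    (X : Ω → ℝ) (hm : Measurable X) (hi : Integrable X P) (hlog : elogAbs P X < 0) :
    ∃ M : ℝ, 0 < M ∧ Integrable (fun ω => trLog M (X ω)) P ∧ ∫ ω, trLog M (X ω) ∂P < 0 := by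
  unfold elogAbs at hlog
  set A := ∫⁻ ω, logPlus |X ω| ∂P with hA
  set B := ∫⁻ ω, logMinus |X ω| ∂P with hB
  have hAtop : A ≠ ⊤ := by
    have h1 : A ≤ ∫⁻ ω, ENNReal.ofReal |X ω| ∂P := by
      refine lintegral_mono fun ω => ?_
      unfold logPlus
      refine ENNReal.ofReal_le_ofReal ?_
      rcases eq_or_lt_of_le (abs_nonneg (X ω)) with h | h
      · simp [← h, Real.log_zero]
      · linarith [Real.log_le_sub_one_of_pos h]
    have h2 : ∫⁻ ω, ENNReal.ofReal |X ω| ∂P = ENNReal.ofReal (∫ ω, |X ω| ∂P) :=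
      (ofReal_integral_eq_lintegral_ofReal hi.abs
        (Filter.Eventually.of_forall fun ω => abs_nonneg _)).symm
    exact ne_top_of_le_ne_top (by rw [h2]; exact ENNReal.ofReal_ne_top) h1
  have hAB : A < B := by
    rcases eq_or_ne B ⊤ with h | h
    · rw [h]; exact lt_top_iff_ne_top.2 hAtop
    · rw [EReal.sub_lt_iff (Or.inl (EReal.coe_ennreal_ne_bot B))
        (Or.inl (by simpa using h)), zero_add] at hlog
      exact EReal.coe_ennreal_lt_coe_ennreal_iff.1 hlog
  have hmeasLM : Measurable fun ω => logMinus |X ω| := by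
    have : Measurable logMinus := by
      unfold logMinus
      exact Measurable.ite (by simp) measurable_const
        (ENNReal.measurable_ofReal.comp Real.measurable_log.neg)
    exact this.comp hm.abs
  have hBsup : ⨆ M : ℕ, ∫⁻ ω, min (logMinus |X ω|) (M : ℝ≥0∞) ∂P = B := by
    rw [← lintegral_iSup (fun M => hmeasLM.min measurable_const)
      (fun i j hij ω => min_le_min le_rfl (by exact_mod_cast Nat.cast_le.2 hij))]
    refine lintegral_congr fun ω => ?_
    rcases eq_or_ne (logMinus |X ω|) ⊤ with h | h
    · rw [h]
      have hmt : ∀ M : ℕ, min (⊤:ℝ≥0∞) (M:ℝ≥0∞) = (M:ℝ≥0∞) := fun M => min_eq_right le_top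
      simp only [hmt]
      exact ENNReal.iSup_natCast
    · obtain ⟨n, hn⟩ := ENNReal.exists_nat_gt h
      refine le_antisymm (iSup_le fun M => min_le_left _ _) ?_
      exact le_iSup_of_le n (le_of_eq (min_eq_left hn.le).symm)
  obtain ⟨M, hM⟩ : ∃ M : ℕ, A < ∫⁻ ω, min (logMinus |X ω|) (M:ℝ≥0∞) ∂P := by
    rw [← hBsup] at hAB
    exact lt_iSup_iff.1 hAB
  have hFM_ne_top : (∫⁻ ω, min (logMinus |X ω|) (M:ℝ≥0∞) ∂P) ≠ ⊤ := by
    refine ne_top_of_le_ne_top (by simp : ((M:ℝ≥0∞)) ≠ ⊤) ?_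
    calc ∫⁻ ω, min (logMinus |X ω|) (M:ℝ≥0∞) ∂P ≤ ∫⁻ _, (M:ℝ≥0∞) ∂P :=
      lintegral_mono fun ω => min_le_right _ _
    _ = M := by simp
  have hMpos : (0:ℝ) < M := by
    rcases Nat.eq_zero_or_pos M with h | h
    · exfalso
      rw [h] at hM
      simp at hM
    · exact_mod_cast h
  have hintM : Integrable (fun ω => trLog (M:ℝ) (X ω)) P := by
    refine Integrable.mono' ((integrable_const ((M:ℝ))).add hi.abs)
      (((measurable_trLog M).comp hm).aestronglyMeasurable) ?_
    exact Filter.Eventually.of_forall fun ω => abs_trLog_le _ _ hMpos.le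
  have hpos : ∀ ω, ENNReal.ofReal (trLog (M:ℝ) (X ω)) = logPlus |X ω| := by
    intro ω
    unfold trLog logPlus
    by_cases h : X ω = 0
    · rw [if_pos h, h]
      rw [abs_zero, Real.log_zero, ENNReal.ofReal_zero, ENNReal.ofReal_of_nonpos (by linarith)]
    · rw [if_neg h]
      rcases le_or_gt (-(M:ℝ)) (Real.log |X ω|) with h2 | h2
      · rw [max_eq_left h2]
      · rw [max_eq_right h2.le, ENNReal.ofReal_of_nonpos (by linarith),
          ENNReal.ofReal_of_nonpos (by linarith)]
  have hneg : ∀ ω, ENNReal.ofReal (-(trLog (M:ℝ) (X ω))) = min (logMinus |X ω|) (M:ℝ≥0∞) := by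
    intro ω
    unfold trLog logMinus
    by_cases h : X ω = 0
    · rw [if_pos h, h, abs_zero, if_pos rfl, neg_neg, ENNReal.ofReal_natCast,
        min_eq_right le_top]
    · rw [if_neg h, if_neg (abs_ne_zero.2 h)]
      have hmm : min (-(Real.log |X ω|)) ((M:ℝ)) = -(max (Real.log |X ω|) (-(M:ℝ))) := by
        have := min_neg_neg (Real.log |X ω|) (-(M:ℝ))
        rwa [neg_neg] at this
      rw [← hmm, monotone_ofReal.map_min, ENNReal.ofReal_natCast]
  refine ⟨M, hMpos, hintM, ?_⟩
  rw [integral_eq_lintegral_pos_part_sub_lintegral_neg_part hintM, lintegral_congr hpos,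
    lintegral_congr hneg, sub_neg]
  exact (ENNReal.toReal_lt_toReal hAtop hFM_ne_top).2 hM

lemma cesaro_succ_div {T : ℕ → ℝ} {c : ℝ} (h : Tendsto (fun n => T n / n) atTop (𝓝 c)) :
    Tendsto (fun n => (T (n + 1) - T n) / ((n : ℝ) + 1)) atTop (𝓝 0) := by
  have h1 : Tendsto (fun n : ℕ => T (n + 1) / ((n : ℝ) + 1)) atTop (𝓝 c) := by
    have h' := h.comp (tendsto_add_atTop_nat 1)
    refine h'.congr fun n => ?_
    simp only [Function.comp]
    push_cast
    ring_nf
  have hr : Tendsto (fun n : ℕ => (n : ℝ) / ((n : ℝ) + 1)) atTop (𝓝 1) := by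
    have h0 : Tendsto (fun n : ℕ => 1 / ((n : ℝ) + 1)) atTop (𝓝 0) :=
      tendsto_one_div_add_atTop_nhds_zero_nat
    have h1' := (tendsto_const_nhds : Tendsto (fun _ : ℕ => (1:ℝ)) atTop (𝓝 1)).sub h0
    rw [sub_zero] at h1'
    refine h1'.congr fun n => ?_
    have hn : (n : ℝ) + 1 ≠ 0 := by positivity
    field_simp
    ring
  have h2 : Tendsto (fun n : ℕ => T n / ((n : ℝ) + 1)) atTop (𝓝 c) := by
    have := h.mul hr
    rw [mul_one] at this
    refine (this.congr' ?_)
    filter_upwards [eventually_gt_atTop 0] with n hn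
    have hn0 : (n : ℝ) ≠ 0 := Nat.cast_ne_zero.2 hn.ne'
    have hn1 : (n : ℝ) + 1 ≠ 0 := by positivity
    field_simp
  have h3 := h1.sub h2
  rw [sub_self] at h3
  exact h3.congr fun n => (sub_div _ _ _).symm

lemma summable_geom_linear {q : ℝ} (hq0 : 0 < q) (hq1 : q < 1) :
    Summable (fun j : ℕ => q ^ (j + 1) * ((j : ℝ) + 2)) := by
  have h1 : Summable (fun n : ℕ => ((n : ℝ) + 1) * q ^ n) := by
    have ha : Summable (fun n : ℕ => (n : ℝ) ^ 1 * q ^ n) :=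
      summable_pow_mul_geometric_of_norm_lt_one 1
        (by rwa [Real.norm_eq_abs, abs_of_pos hq0])
    have hb : Summable (fun n : ℕ => q ^ n) := summable_geometric_of_lt_one hq0.le hq1
    have := ha.add hb
    refine this.congr fun n => ?_
    ring
  have h2 := (summable_nat_add_iff 1).2 h1
  refine h2.congr fun j => ?_
  push_cast
  ring
/-- if `E log|φ₀ + b₀ ε₁| < 0`, then any strictly stationary process `(Y_t)` on the
same probability space solving the bilinear recursion coincides almost surely with `(S_t)`:
the stationary solution is unique. -/
theorem bilinear_stationary_solution_unique
    {Ω : Type*} [MeasurableSpace Ω] (P : Measure Ω) [IsProbabilityMeasure P]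
    (ε : ℤ → Ω → ℝ) (μ₀ φ₀ b₀ σ₀sq : ℝ)
    (hmeas : ∀ t, Measurable (ε t))
    (hindep : iIndepFun ε P)
    (hident : ∀ s t : ℤ, IdentDistrib (ε s) (ε t) P P)
    (hint : Integrable (ε 1) P) (hmean : ∫ ω, ε 1 ω ∂P = 0)
    (hsq : Integrable (fun ω => (ε 1 ω) ^ 2) P) (hvar : ∫ ω, (ε 1 ω) ^ 2 ∂P = σ₀sq)
    (hσ : 0 < σ₀sq)
    (hlog : elogAbs P (fun ω => φ₀ + b₀ * ε 1 ω) < 0)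
    (Y : ℤ → Ω → ℝ) (hYmeas : ∀ t, Measurable (Y t))
    (hYstat : ∀ (n : ℕ) (ts : Fin n → ℤ) (k : ℤ),
      IdentDistrib (fun ω (i : Fin n) => Y (ts i + k) ω)
        (fun ω (i : Fin n) => Y (ts i) ω) P P)
    (hYsol : ∀ t : ℤ, ∀ᵐ ω ∂P,
      Y t ω = μ₀ + φ₀ * Y (t - 2) ω + b₀ * Y (t - 2) ω * ε (t - 1) ω + ε t ω) :
    ∀ t : ℤ, Y t =ᵐ[P] blS μ₀ φ₀ b₀ ε t := by
  intro t
  have hεint : ∀ s : ℤ, Integrable (ε s) P := fun s => (hident s 1).integrable_iff.2 hint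
  have haff : Integrable (fun ω => φ₀ + b₀ * ε 1 ω) P :=
    (integrable_const φ₀).add (hint.const_mul b₀)
  obtain ⟨M, hMpos, hintM, hmneg⟩ := exists_good_trunc P (fun ω => φ₀ + b₀ * ε 1 ω)
    (measurable_const.add (measurable_const.mul (hmeas 1))) haff hlog
  set m := ∫ ω, trLog M (φ₀ + b₀ * ε 1 ω) ∂P with hmdef
  set q := Real.exp (m / 2) with hqdef
  have hq0 : 0 < q := Real.exp_pos _
  have hq1 : q < 1 := Real.exp_lt_one_iff.2 (by linarith)
  have hgmeas : Measurable (fun x : ℝ => trLog M (φ₀ + b₀ * x)) :=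
    (measurable_trLog M).comp (measurable_const.add (measurable_const.mul measurable_id))
  set X : ℕ → Ω → ℝ := fun r ω => trLog M (φ₀ + b₀ * ε (t - 2 * (r : ℤ) - 1) ω) with hXdef
  have hXid : ∀ i, IdentDistrib (X i) (X 0) P P := fun i => (hident _ _).comp hgmeas
  have hXint : Integrable (X 0) P := by
    have h1 : IdentDistrib (X 0) (fun ω => trLog M (φ₀ + b₀ * ε 1 ω)) P P :=
      (hident _ _).comp hgmeas
    exact h1.integrable_iff.2 hintM
  have hXindep : Pairwise (Function.onFun (fun x1 x2 => IndepFun x1 x2 P) X) := by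
    intro i j hij
    have hne : (t - 2 * (i : ℤ) - 1) ≠ (t - 2 * (j : ℤ) - 1) := fun hh => hij (by omega)
    exact (hindep.indepFun hne).comp hgmeas hgmeas
  have hXmean : ∫ ω, X 0 ω ∂P = m := by
    have h1 : IdentDistrib (X 0) (fun ω => trLog M (φ₀ + b₀ * ε 1 ω)) P P :=
      (hident _ _).comp hgmeas
    rw [h1.integral_eq]
  have hX := strong_law_ae_real X hXint hXindep hXid
  rw [hXmean] at hX
  -- second SLLN for the innovations
  have hhmeas : Measurable (fun x : ℝ => |μ₀ + x|) :=
    (measurable_const.add measurable_id).abs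
  set W : ℕ → Ω → ℝ := fun j ω => |μ₀ + ε (t - 2 * ((j : ℤ) + 1)) ω| with hWdef
  have hWid : ∀ i, IdentDistrib (W i) (W 0) P P := fun i => (hident _ _).comp hhmeas
  have hWint : Integrable (W 0) P := by
    refine Integrable.mono' (g := fun ω => |μ₀| + |ε (t - 2 * (((0:ℕ):ℤ) + 1)) ω|)
      ((integrable_const |μ₀|).add (hεint _).abs)
      ((hhmeas.comp (hmeas _)).aestronglyMeasurable) ?_
    refine Filter.Eventually.of_forall fun ω => ?_
    rw [Real.norm_eq_abs, abs_abs]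
    exact abs_add_le μ₀ _
  have hWindep : Pairwise (Function.onFun (fun x1 x2 => IndepFun x1 x2 P) W) := by
    intro i j hij
    have hne : (t - 2 * ((i : ℤ) + 1)) ≠ (t - 2 * ((j : ℤ) + 1)) := fun hh => hij (by omega)
    exact (hindep.indepFun hne).comp hhmeas hhmeas
  have hW := strong_law_ae_real W hWint hWindep hWid
  -- pointwise product bound
  have hPibound : ∀ (ω : Ω) (n : ℕ),
      |∏ r ∈ Finset.range (n + 1), (φ₀ + b₀ * ε (t - 2 * (r : ℤ) - 1) ω)|
        ≤ Real.exp (∑ r ∈ Finset.range (n + 1), X r ω) := by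
    intro ω n
    rw [Finset.abs_prod, Real.exp_sum]
    refine Finset.prod_le_prod (fun r _ => abs_nonneg _) fun r _ => ?_
    exact abs_le_exp_trLog M _
  -- good event 1 : eventual geometric bound on products
  have good1 : ∀ᵐ ω ∂P, ∀ᶠ n in atTop,
      |∏ r ∈ Finset.range (n + 1), (φ₀ + b₀ * ε (t - 2 * (r : ℤ) - 1) ω)| ≤ q ^ (n + 1) := by
    filter_upwards [hX] with ω hω
    have h1 : ∀ᶠ n in atTop, (∑ r ∈ Finset.range n, X r ω) / n < m / 2 :=
      hω.eventually_lt_const (by linarith)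
    obtain ⟨N, hN⟩ := eventually_atTop.1 (h1.and (eventually_ge_atTop 1))
    rw [eventually_atTop]
    refine ⟨N, fun n hn => ?_⟩
    obtain ⟨hdiv, hge⟩ := hN (n + 1) (by omega)
    have hnpos : (0:ℝ) < (n : ℝ) + 1 := by positivity
    have hsum : (∑ r ∈ Finset.range (n + 1), X r ω) ≤ m / 2 * ((n : ℝ) + 1) := by
      push_cast at hdiv
      rw [div_lt_iff₀ hnpos] at hdiv
      linarith
    calc |∏ r ∈ Finset.range (n + 1), (φ₀ + b₀ * ε (t - 2 * (r : ℤ) - 1) ω)|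
        ≤ Real.exp (∑ r ∈ Finset.range (n + 1), X r ω) := hPibound ω n
      _ ≤ Real.exp (m / 2 * ((n : ℝ) + 1)) := Real.exp_le_exp.2 hsum
      _ = q ^ (n + 1) := by
          rw [hqdef, ← Real.exp_nat_mul]
          congr 1
          push_cast
          ring
  -- good event 2 : innovations grow at most linearly
  have good2 : ∀ᵐ ω ∂P, ∀ᶠ j in atTop, W j ω ≤ (j : ℝ) + 1 := by
    filter_upwards [hW] with ω hω
    have hc := cesaro_succ_div (T := fun n => ∑ j ∈ Finset.range n, W j ω) hω
    have hc' : Tendsto (fun n : ℕ => W n ω / ((n : ℝ) + 1)) atTop (𝓝 0) := by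
      refine hc.congr fun n => ?_
      simp only [Finset.sum_range_succ]
      ring_nf
    have h5 := hc'.eventually_lt_const zero_lt_one
    filter_upwards [h5] with j hj
    have hjp : (0:ℝ) < (j : ℝ) + 1 := by positivity
    rw [div_lt_iff₀ hjp, one_mul] at hj
    have hW0 : 0 ≤ W j ω := abs_nonneg _
    linarith
  -- summability of the series
  have hsummable : ∀ᵐ ω ∂P, Summable (fun j => blTerm μ₀ φ₀ b₀ ε t j ω) := by
    filter_upwards [good1, good2] with ω h1 h2
    refine Summable.of_norm_bounded_eventually_nat (g := fun j => q ^ (j + 1) * ((j : ℝ) + 2))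
      (summable_geom_linear hq0 hq1) ?_
    filter_upwards [h1, h2] with j hj1 hj2
    rw [Real.norm_eq_abs]
    have hterm : |blTerm μ₀ φ₀ b₀ ε t j ω|
        = |∏ r ∈ Finset.range (j + 1), (φ₀ + b₀ * ε (t - 2 * (r : ℤ) - 1) ω)| * W j ω := by
      rw [blTerm, abs_mul]
    rw [hterm]
    have hWnn : 0 ≤ W j ω := abs_nonneg _
    have h3 : W j ω ≤ (j : ℝ) + 2 := by linarith
    exact mul_le_mul hj1 h3 hWnn (by positivity)
  -- products tend to zero a.s.
  have hPitend : ∀ᵐ ω ∂P, Tendsto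
      (fun n : ℕ => ∏ r ∈ Finset.range (n + 1), (φ₀ + b₀ * ε (t - 2 * (r : ℤ) - 1) ω))
      atTop (𝓝 0) := by
    filter_upwards [good1] with ω h1
    have habs : Tendsto
        (fun n : ℕ => |∏ r ∈ Finset.range (n + 1), (φ₀ + b₀ * ε (t - 2 * (r : ℤ) - 1) ω)|)
        atTop (𝓝 0) := by
      refine squeeze_zero' (Filter.Eventually.of_forall fun n => abs_nonneg _) h1 ?_
      have hq := (tendsto_pow_atTop_nhds_zero_of_lt_one hq0.le hq1).comp (tendsto_add_atTop_nat 1)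
      exact hq
    exact (tendsto_zero_iff_abs_tendsto_zero _).2 habs
  -- the iterated expansion of the recursion
  have hexp : ∀ᵐ ω ∂P, ∀ n : ℕ, Y t ω = μ₀ + ε t ω
      + (∑ j ∈ Finset.range n, blTerm μ₀ φ₀ b₀ ε t j ω)
      + (∏ r ∈ Finset.range (n + 1), (φ₀ + b₀ * ε (t - 2 * (r : ℤ) - 1) ω))
        * Y (t - 2 * ((n : ℤ) + 1)) ω := by
    have hsolall : ∀ᵐ ω ∂P, ∀ k : ℕ, Y (t - 2 * (k : ℤ)) ω
        = μ₀ + φ₀ * Y (t - 2 * (k : ℤ) - 2) ω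
          + b₀ * Y (t - 2 * (k : ℤ) - 2) ω * ε (t - 2 * (k : ℤ) - 1) ω
          + ε (t - 2 * (k : ℤ)) ω := ae_all_iff.2 fun k => hYsol _
    filter_upwards [hsolall] with ω hsol
    intro n
    induction n with
    | zero =>
        have h0 := hsol 0
        norm_num at h0 ⊢
        linear_combination h0
    | succ n ih =>
        have h1 := hsol (n + 1)
        push_cast at h1 ih ⊢
        have e1 : t - 2 * ((n : ℤ) + 1) - 2 = t - 2 * ((n : ℤ) + 1 + 1) := by ring
        rw [e1] at h1
        rw [Finset.sum_range_succ, Finset.prod_range_succ]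
        simp only [blTerm] at ih ⊢
        push_cast at ih ⊢
        linear_combination ih
          + (∏ r ∈ Finset.range (n + 1), (φ₀ + b₀ * ε (t - 2 * (r : ℤ) - 1) ω)) * h1
  -- remainder converges a.s. to Y t - blS
  have hRtend : ∀ᵐ ω ∂P, Tendsto
      (fun n : ℕ => (∏ r ∈ Finset.range (n + 1), (φ₀ + b₀ * ε (t - 2 * (r : ℤ) - 1) ω))
        * Y (t - 2 * ((n : ℤ) + 1)) ω) atTop (𝓝 (Y t ω - blS μ₀ φ₀ b₀ ε t ω)) := by
    filter_upwards [hexp, hsummable] with ω h1 h2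
    have h3 : Tendsto (fun n => ∑ j ∈ Finset.range n, blTerm μ₀ φ₀ b₀ ε t j ω) atTop
        (𝓝 (∑' j, blTerm μ₀ φ₀ b₀ ε t j ω)) := h2.hasSum.tendsto_sum_nat
    have h4 : Tendsto
        (fun n => Y t ω - (μ₀ + ε t ω + ∑ j ∈ Finset.range n, blTerm μ₀ φ₀ b₀ ε t j ω))
        atTop (𝓝 (Y t ω - (μ₀ + ε t ω + ∑' j, blTerm μ₀ φ₀ b₀ ε t j ω))) :=
      tendsto_const_nhds.sub (tendsto_const_nhds.add h3)
    have h5 : Y t ω - (μ₀ + ε t ω + ∑' j, blTerm μ₀ φ₀ b₀ ε t j ω)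
        = Y t ω - blS μ₀ φ₀ b₀ ε t ω := by rw [blS]
    rw [h5] at h4
    refine h4.congr fun n => ?_
    linear_combination (h1 n)
  -- marginal distributions of Y
  have hYid : ∀ s : ℤ, IdentDistrib (Y s) (Y t) P P := by
    intro s
    have h1 := (hYstat 1 (fun _ => t) (s - t)).comp (measurable_pi_apply (0 : Fin 1))
    have e : t + (s - t) = s := by ring
    rw [e] at h1
    exact h1
  have hYtailprob : ∀ (s : ℤ) (M' : ℝ), P {ω | M' ≤ |Y s ω|} = P {ω | M' ≤ |Y t ω|} := by
    intro s M'
    have hset : MeasurableSet {x : ℝ | M' ≤ |x|} :=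
      measurableSet_le measurable_const measurable_abs
    calc P {ω | M' ≤ |Y s ω|} = Measure.map (Y s) P {x | M' ≤ |x|} := by
          rw [Measure.map_apply (hYmeas s) hset]; rfl
    _ = Measure.map (Y t) P {x | M' ≤ |x|} := by rw [(hYid s).map_eq]
    _ = P {ω | M' ≤ |Y t ω|} := by rw [Measure.map_apply (hYmeas t) hset]; rfl
  have htail0 : Tendsto (fun M' : ℕ => P {ω | (M' : ℝ) ≤ |Y t ω|}) atTop (𝓝 0) := by
    have hms : ∀ M' : ℕ, NullMeasurableSet {ω | ((M' : ℕ) : ℝ) ≤ |Y t ω|} P := fun M' =>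
      (measurableSet_le measurable_const (hYmeas t).abs).nullMeasurableSet
    have hanti : Antitone fun M' : ℕ => {ω | ((M' : ℕ) : ℝ) ≤ |Y t ω|} := by
      intro a b hab x hx
      simp only [Set.mem_setOf_eq] at hx ⊢
      have hc : ((a : ℕ) : ℝ) ≤ ((b : ℕ) : ℝ) := by exact_mod_cast hab
      linarith
    have h9 := tendsto_measure_iInter_atTop hms hanti ⟨0, measure_ne_top P _⟩
    have hempty : ⋂ M' : ℕ, {ω | ((M' : ℕ) : ℝ) ≤ |Y t ω|} = ∅ := by
      ext x
      simp only [Set.mem_iInter, Set.mem_setOf_eq, Set.mem_empty_iff_false, iff_false,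
        not_forall, not_le]
      obtain ⟨n, hn⟩ := exists_nat_gt |Y t x|
      exact ⟨n, hn⟩
    rw [hempty, measure_empty] at h9
    exact h9
  -- convergence in measure of the products to zero
  have hPimeas : ∀ n : ℕ, Measurable fun ω =>
      ∏ r ∈ Finset.range (n + 1), (φ₀ + b₀ * ε (t - 2 * (r : ℤ) - 1) ω) := fun n =>
    Finset.measurable_prod _ fun r _ => measurable_const.add (measurable_const.mul (hmeas _))
  have hPiIM : TendstoInMeasure P
      (fun n ω => ∏ r ∈ Finset.range (n + 1), (φ₀ + b₀ * ε (t - 2 * (r : ℤ) - 1) ω)) atTop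
      (fun _ => (0 : ℝ)) :=
    tendstoInMeasure_of_tendsto_ae (fun n => (hPimeas n).aestronglyMeasurable) hPitend
  have hRIM : TendstoInMeasure P
      (fun n ω => (∏ r ∈ Finset.range (n + 1), (φ₀ + b₀ * ε (t - 2 * (r : ℤ) - 1) ω))
        * Y (t - 2 * ((n : ℤ) + 1)) ω) atTop (fun _ => (0 : ℝ)) := by
    rw [tendstoInMeasure_iff_dist]
    intro δ hδ
    rw [ENNReal.tendsto_atTop_zero]
    intro εe hεe
    have hhalf : (0 : ℝ≥0∞) < εe / 2 := ENNReal.half_pos hεe.ne'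
    obtain ⟨M0, hM0a, hM0b⟩ :=
      ((htail0.eventually_lt_const hhalf).and (eventually_ge_atTop 1)).exists
    have hM0pos : (0 : ℝ) < (M0 : ℝ) := by exact_mod_cast hM0b
    have hδM : 0 < δ / (M0 : ℝ) := div_pos hδ hM0pos
    have h5 := tendstoInMeasure_iff_dist.1 hPiIM (δ / (M0 : ℝ)) hδM
    obtain ⟨N, hN⟩ := eventually_atTop.1 (h5.eventually_lt_const hhalf)
    refine ⟨N, fun n hn => ?_⟩
    have hsub : {x | δ ≤ dist ((∏ r ∈ Finset.range (n + 1),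
            (φ₀ + b₀ * ε (t - 2 * (r : ℤ) - 1) x)) * Y (t - 2 * ((n : ℤ) + 1)) x) 0}
        ⊆ {x | δ / (M0 : ℝ) ≤ dist (∏ r ∈ Finset.range (n + 1),
            (φ₀ + b₀ * ε (t - 2 * (r : ℤ) - 1) x)) 0}
          ∪ {x | (M0 : ℝ) ≤ |Y (t - 2 * ((n : ℤ) + 1)) x|} := by
      intro x hx
      simp only [Set.mem_setOf_eq, Set.mem_union, Real.dist_0_eq_abs] at hx ⊢
      by_contra hcon
      push_neg at hcon
      obtain ⟨h7, h8⟩ := hcon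
      rw [abs_mul] at hx
      have h9 : |∏ r ∈ Finset.range (n + 1), (φ₀ + b₀ * ε (t - 2 * (r : ℤ) - 1) x)|
          * |Y (t - 2 * ((n : ℤ) + 1)) x| < δ := by
        calc |∏ r ∈ Finset.range (n + 1), (φ₀ + b₀ * ε (t - 2 * (r : ℤ) - 1) x)|
            * |Y (t - 2 * ((n : ℤ) + 1)) x|
            ≤ |∏ r ∈ Finset.range (n + 1), (φ₀ + b₀ * ε (t - 2 * (r : ℤ) - 1) x)| * (M0 : ℝ) :=
              mul_le_mul_of_nonneg_left h8.le (abs_nonneg _)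
        _ < (δ / (M0 : ℝ)) * (M0 : ℝ) := mul_lt_mul_of_pos_right h7 hM0pos
        _ = δ := div_mul_cancel₀ δ hM0pos.ne'
      linarith
    refine le_trans (measure_mono hsub) ?_
    refine le_trans (measure_union_le _ _) ?_
    rw [hYtailprob (t - 2 * ((n : ℤ) + 1)) ((M0 : ℕ) : ℝ)]
    calc P {x | δ / (M0 : ℝ) ≤ dist (∏ r ∈ Finset.range (n + 1),
            (φ₀ + b₀ * ε (t - 2 * (r : ℤ) - 1) x)) 0}
          + P {ω | ((M0 : ℕ) : ℝ) ≤ |Y t ω|}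
        ≤ εe / 2 + εe / 2 := add_le_add (hN n hn).le hM0a.le
    _ = εe := ENNReal.add_halves εe
  obtain ⟨ns, hnsmono, hnsae⟩ := hRIM.exists_seq_tendsto_ae
  filter_upwards [hRtend, hnsae] with ω h1 h2
  have h3 := h1.comp hnsmono.tendsto_atTop
  have h4 := tendsto_nhds_unique h3 h2
  linarith [h4]
end
end

section
/- Let W be a nonnegative real random variable with E W < ∞ and E ln W < 0, where E ln W is well defined in [−∞, ∞) with the convention ln 0 = −∞ (note ln⁺ W ≤ W is integrable). Then there exists δ ∈ (0, 1) such that E W^δ < 1. -/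
open MeasureTheory ProbabilityTheory
open scoped ENNReal NNReal

noncomputable section

/-- `E log W` for a nonnegative `W`, as an extended real number, with `log 0 = -∞`. -/
def elog {Ω : Type*} [MeasurableSpace Ω] (P : Measure Ω) (W : Ω → ℝ) : EReal :=
  ((∫⁻ ω, logPlus (W ω) ∂P : ENNReal) : EReal) - ((∫⁻ ω, logMinus (W ω) ∂P : ENNReal) : EReal)

lemma iSup_min_nat (a : ℝ≥0∞) : ⨆ n : ℕ, min a (n : ℝ≥0∞) = a := by
  rcases eq_top_or_lt_top a with h | h
  · subst h
    simp only [min_eq_right (le_top : (_ : ℝ≥0∞) ≤ ⊤)]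
    exact ENNReal.iSup_natCast
  · obtain ⟨n, hn⟩ := ENNReal.exists_nat_gt h.ne
    exact le_antisymm (iSup_le fun n => min_le_left _ _)
      (le_iSup_of_le n (le_of_eq (min_eq_left hn.le).symm))

/-- convexity bound: `exp (δ t) ≤ δ * exp t + (1 - δ)` for `δ ∈ [0,1]`. -/
lemma exp_mul_le (t : ℝ) {δ : ℝ} (h0 : 0 ≤ δ) (h1 : δ ≤ 1) :
    Real.exp (δ * t) ≤ δ * Real.exp t + (1 - δ) := by
  have := (convexOn_exp).2 (Set.mem_univ t) (Set.mem_univ (0:ℝ)) h0 (by linarith)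
    (by ring : δ + (1 - δ) = 1)
  simpa using this

/-- slope of `exp` tends to derivative: `(exp (δ n * t) - 1)/ δ n → t` for `δ n = 1/(n+1)`. -/
lemma tendsto_slope_exp (t : ℝ) :
    Filter.Tendsto (fun n : ℕ => (Real.exp ((1 / (n + 1 : ℝ)) * t) - 1) / (1 / (n + 1 : ℝ)))
      Filter.atTop (nhds t) := by
  have hd : HasDerivAt (fun x : ℝ => Real.exp (x * t)) t 0 := by
    simpa using ((hasDerivAt_id (0:ℝ)).mul_const t).exp
  have hslope := hasDerivAt_iff_tendsto_slope.1 hd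
  have hδ : Filter.Tendsto (fun n : ℕ => 1 / (n + 1 : ℝ)) Filter.atTop (nhdsWithin 0 {(0:ℝ)}ᶜ) := by
    rw [tendsto_nhdsWithin_iff]
    refine ⟨tendsto_one_div_add_atTop_nhds_zero_nat, Filter.Eventually.of_forall fun n => ?_⟩
    simp only [Set.mem_compl_iff, Set.mem_singleton_iff]
    positivity
  have := hslope.comp hδ
  simp only [Function.comp_def, slope_def_field] at this ⊢
  convert this using 2 with n
  field_simp
  simp

/-- if `W ≥ 0`, `E W < ∞` and `E log W < 0` (possibly `-∞`), then there is
`δ ∈ (0,1)` with `E W^δ < 1`. -/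
theorem exists_delta_moment_lt_one
    {Ω : Type*} [MeasurableSpace Ω] (P : Measure Ω) [IsProbabilityMeasure P]
    (W : Ω → ℝ) (hmeas : Measurable W) (hnn : ∀ ω, 0 ≤ W ω)
    (hint : Integrable W P)
    (hlog : elog P W < 0) :
    ∃ δ : ℝ, 0 < δ ∧ δ < 1 ∧ Integrable (fun ω => W ω ^ δ) P ∧ ∫ ω, W ω ^ δ ∂P < 1 := by
  classical
  set A : ℝ≥0∞ := ∫⁻ ω, logPlus (W ω) ∂P with hA
  set B : ℝ≥0∞ := ∫⁻ ω, logMinus (W ω) ∂P with hB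
  -- A is finite
  have hWlint : (∫⁻ ω, ENNReal.ofReal (W ω) ∂P) < ⊤ := by
    rw [← hasFiniteIntegral_iff_ofReal (Filter.Eventually.of_forall hnn)]
    exact hint.hasFiniteIntegral
  have hAfin : A < ⊤ := by
    refine lt_of_le_of_lt (lintegral_mono fun ω => ?_) hWlint
    unfold logPlus
    apply ENNReal.ofReal_le_ofReal
    rcases eq_or_lt_of_le (hnn ω) with h | h
    · simp [← h]
    · linarith [Real.log_le_sub_one_of_pos h]
  -- A < B
  have hAB : A < B := by
    rw [elog, EReal.sub_lt_iff (Or.inl (EReal.coe_ennreal_ne_bot _))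
      (Or.inr (by simpa using hAfin.ne)), zero_add] at hlog
    exact EReal.coe_ennreal_lt_coe_ennreal_iff.1 hlog
  -- choose truncation level n
  have hmlm : Measurable fun ω => logMinus (W ω) := by
    unfold logMinus
    exact Measurable.ite (hmeas (measurableSet_singleton 0)) measurable_const
      ((ENNReal.measurable_ofReal).comp ((hmeas.log).neg))
  have htrunc : ⨆ n : ℕ, ∫⁻ ω, min (logMinus (W ω)) (n : ℝ≥0∞) ∂P = B := by
    rw [← lintegral_iSup (fun n => hmlm.min measurable_const)
      (fun n m hnm ω => min_le_min le_rfl (by exact_mod_cast Nat.cast_le.2 hnm))]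
    simp_rw [iSup_min_nat]
    rfl
  obtain ⟨n, hn⟩ : ∃ n : ℕ, A < ∫⁻ ω, min (logMinus (W ω)) (n : ℝ≥0∞) ∂P := by
    rw [← lt_iSup_iff, htrunc]; exact hAB
  set c : ℝ := (n : ℝ) with hc
  have hc0 : (0:ℝ) ≤ c := Nat.cast_nonneg n
  -- the truncated log
  set h : Ω → ℝ := fun ω => Real.log (max (W ω) (Real.exp (-c))) with hh
  have hhmeas : Measurable h := (hmeas.max measurable_const).log
  have hlogW : ∀ ω, W ω ≠ 0 → Real.log (W ω) ≤ h ω := fun ω hω =>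
    Real.log_le_log (lt_of_le_of_ne (hnn ω) (Ne.symm hω)) (le_max_left _ _)
  have hlb : ∀ ω, -c ≤ h ω := by
    intro ω
    calc -c = Real.log (Real.exp (-c)) := (Real.log_exp _).symm
    _ ≤ h ω := Real.log_le_log (Real.exp_pos _) (le_max_right _ _)
  have hub : ∀ ω, h ω ≤ Real.exp (-c) + W ω := by
    intro ω
    have hpos : 0 < max (W ω) (Real.exp (-c)) := lt_max_of_lt_right (Real.exp_pos _)
    have := Real.log_le_sub_one_of_pos hpos
    have : Real.log (max (W ω) (Real.exp (-c))) ≤ max (W ω) (Real.exp (-c)) := by linarith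
    refine this.trans ?_
    rcases max_cases (W ω) (Real.exp (-c)) with ⟨he, _⟩ | ⟨he, _⟩ <;> rw [he] <;>
      [linarith [Real.exp_pos (-c)]; linarith [hnn ω]]
  have hCint : Integrable (fun ω => (Real.exp (-c) + c) + W ω) P :=
    (integrable_const _).add hint
  have hinth : Integrable h P := by
    refine hCint.mono' hhmeas.aestronglyMeasurable
      (Filter.Eventually.of_forall fun ω => ?_)
    rw [Real.norm_eq_abs, abs_le]
    constructor
    · have := hlb ω; have := hnn ω; have := Real.exp_pos (-c); simp; nlinarith
    · have := hub ω; simp; nlinarith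
  -- identify positive and negative parts
  have hpos_eq : ∀ ω, ENNReal.ofReal (h ω) = logPlus (W ω) := by
    intro ω
    unfold logPlus
    rcases le_or_gt (W ω) (Real.exp (-c)) with hle | hlt
    · have h1 : h ω = -c := by rw [hh]; simp [max_eq_right hle]
      have h2 : Real.log (W ω) ≤ 0 := by
        rcases eq_or_lt_of_le (hnn ω) with h | h
        · simp [← h]
        · exact Real.log_nonpos (hnn ω) (hle.trans (Real.exp_le_one_iff.2 (by linarith)))
      rw [h1, ENNReal.ofReal_eq_zero.2 (by linarith), ENNReal.ofReal_eq_zero.2 h2]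
    · have h1 : h ω = Real.log (W ω) := by rw [hh]; simp [max_eq_left hlt.le]
      rw [h1]
  have hneg_eq : ∀ ω, ENNReal.ofReal (-h ω) = min (logMinus (W ω)) (n : ℝ≥0∞) := by
    intro ω
    unfold logMinus
    rcases eq_or_lt_of_le (hnn ω) with h0 | h0
    · have h1 : h ω = -c := by rw [hh]; simp [max_eq_right, ← h0, (Real.exp_pos (-c)).le]
      rw [if_pos h0.symm, h1, neg_neg, top_inf_eq, hc, ENNReal.ofReal_natCast]
    · rw [if_neg (ne_of_gt h0)]
      have h1 : h ω = max (Real.log (W ω)) (-c) := by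
        rcases le_total (W ω) (Real.exp (-c)) with hle | hle
        · rw [hh]
          simp only [max_eq_right hle]
          rw [Real.log_exp, max_eq_right]
          calc Real.log (W ω) ≤ Real.log (Real.exp (-c)) := Real.log_le_log h0 hle
          _ = -c := Real.log_exp _
        · rw [hh]
          simp only [max_eq_left hle]
          rw [max_eq_left]
          calc -c = Real.log (Real.exp (-c)) := (Real.log_exp _).symm
          _ ≤ Real.log (W ω) := Real.log_le_log (Real.exp_pos _) hle
      rw [h1]
      have hmm : -(max (Real.log (W ω)) (-c)) = min (-Real.log (W ω)) c := by
        rw [← min_neg_neg, neg_neg]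
      rw [hmm, hc, ← ENNReal.ofReal_natCast n]
      rcases le_total (-Real.log (W ω)) (n:ℝ) with hle | hle
      · rw [min_eq_left hle, min_eq_left (ENNReal.ofReal_le_ofReal hle)]
      · rw [min_eq_right hle, min_eq_right (ENNReal.ofReal_le_ofReal hle)]
  -- E h < 0
  have hEh : ∫ ω, h ω ∂P < 0 := by
    rw [integral_eq_lintegral_pos_part_sub_lintegral_neg_part hinth]
    simp_rw [hpos_eq, hneg_eq]
    rw [sub_neg]
    have hCfin : (∫⁻ ω, min (logMinus (W ω)) (n : ℝ≥0∞) ∂P) < ⊤ := by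
      refine lt_of_le_of_lt (lintegral_mono fun ω => min_le_right _ _) ?_
      simp [lintegral_const]
    exact ENNReal.toReal_strict_mono hCfin.ne hn
  -- dominated convergence
  set δ : ℕ → ℝ := fun n => 1 / (n + 1 : ℝ) with hδdef
  have hδpos : ∀ k, 0 < δ k := fun k => by positivity
  have hδle : ∀ k, δ k ≤ 1 := by
    intro k
    rw [hδdef]
    rw [div_le_one (by positivity)]
    linarith [Nat.cast_nonneg (α := ℝ) k]
  set F : ℕ → Ω → ℝ := fun k ω => (Real.exp (δ k * h ω) - 1) / δ k with hF
  have hFbound : ∀ k ω, ‖F k ω‖ ≤ (c + (Real.exp (-c) + 1)) + W ω := by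
    intro k ω
    rw [Real.norm_eq_abs, abs_le]
    have hek : Real.exp (δ k * h ω) ≤ δ k * Real.exp (h ω) + (1 - δ k) :=
      exp_mul_le _ (hδpos k).le (hδle k)
    have heh : Real.exp (h ω) = max (W ω) (Real.exp (-c)) := by
      rw [hh, Real.exp_log (lt_max_of_lt_right (Real.exp_pos _))]
    have hup : F k ω ≤ Real.exp (h ω) - 1 := by
      rw [hF, div_le_iff₀ (hδpos k)]
      nlinarith [hδpos k]
    have hlo : h ω ≤ F k ω := by
      rw [hF, le_div_iff₀ (hδpos k)]
      nlinarith [Real.add_one_le_exp (δ k * h ω), hδpos k]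
    constructor
    · have := hlb ω; have := Real.exp_pos (-c); have := hnn ω; nlinarith
    · have hm : max (W ω) (Real.exp (-c)) ≤ W ω + Real.exp (-c) := by
        rcases max_cases (W ω) (Real.exp (-c)) with ⟨he, _⟩ | ⟨he, _⟩ <;> rw [he] <;>
          [linarith [Real.exp_pos (-c)]; linarith [hnn ω]]
      rw [heh] at hup
      nlinarith [hnn ω, Real.exp_pos (-c)]
  have hFtendsto : ∀ ω, Filter.Tendsto (fun k => F k ω) Filter.atTop (nhds (h ω)) :=
    fun ω => tendsto_slope_exp (h ω)
  have hbint : Integrable (fun ω => (c + (Real.exp (-c) + 1)) + W ω) P :=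
    (integrable_const _).add hint
  have hFmeas : ∀ k, AEStronglyMeasurable (F k) P := by
    intro k
    exact (((hhmeas.const_mul (δ k)).exp.sub measurable_const).div_const
      (δ k)).aestronglyMeasurable
  have hDCT := tendsto_integral_of_dominated_convergence _ hFmeas hbint
    (fun k => Filter.Eventually.of_forall (hFbound k))
    (Filter.Eventually.of_forall hFtendsto)
  obtain ⟨k, hk1, hk⟩ : ∃ k : ℕ, 1 ≤ k ∧ ∫ ω, F k ω ∂P < 0 := by
    obtain ⟨k, h1, h2⟩ := ((Filter.eventually_ge_atTop 1).and
      (hDCT.eventually_lt_const hEh)).exists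
    exact ⟨k, h1, h2⟩
  -- integrability of exp (δ k * h)
  have hexpint : Integrable (fun ω => Real.exp (δ k * h ω)) P := by
    have : (fun ω => Real.exp (δ k * h ω)) = fun ω => δ k * F k ω + 1 := by
      funext ω
      rw [hF]
      field_simp [(hδpos k).ne']
      ring
    rw [this]
    have hFint : Integrable (F k) P :=
      hbint.mono' (hFmeas k) (Filter.Eventually.of_forall (hFbound k))
    exact (hFint.const_mul _).add (integrable_const 1)
  -- E exp(δ k h) < 1
  have hexp_lt : ∫ ω, Real.exp (δ k * h ω) ∂P < 1 := by
    have hFk : ∫ ω, F k ω ∂P = (∫ ω, Real.exp (δ k * h ω) ∂P - 1) / δ k := by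
      rw [hF]
      rw [integral_div, integral_sub hexpint (integrable_const 1)]
      simp
    rw [hFk, div_neg_iff] at hk
    rcases hk with ⟨h1, h2⟩ | ⟨h1, h2⟩
    · linarith [hδpos k]
    · linarith
  -- conclude
  refine ⟨δ k, hδpos k, ?_, ?_, ?_⟩
  · rw [hδdef, div_lt_one (by positivity)]
    have : (1:ℝ) ≤ (k:ℝ) := by exact_mod_cast hk1
    linarith
  · -- integrability of W ^ δ k
    refine ((integrable_const (1:ℝ)).add hint).mono' ((hmeas.pow_const _).aestronglyMeasurable)
      (Filter.Eventually.of_forall fun ω => ?_)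
    show _ ≤ 1 + W ω
    rw [Real.norm_eq_abs, abs_of_nonneg (Real.rpow_nonneg (hnn ω) _)]
    rcases le_total (W ω) 1 with hle | hle
    · have := Real.rpow_le_one (hnn ω) hle (hδpos k).le
      linarith [hnn ω]
    · have := Real.rpow_le_rpow_of_exponent_le hle (hδle k)
      rw [Real.rpow_one] at this
      linarith
  · -- E W^δ ≤ E exp(δ h) < 1
    refine lt_of_le_of_lt ?_ hexp_lt
    refine integral_mono ?_ hexpint fun ω => ?_
    · refine ((integrable_const (1:ℝ)).add hint).mono' ((hmeas.pow_const _).aestronglyMeasurable)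
        (Filter.Eventually.of_forall fun ω => ?_)
      show _ ≤ 1 + W ω
      rw [Real.norm_eq_abs, abs_of_nonneg (Real.rpow_nonneg (hnn ω) _)]
      rcases le_total (W ω) 1 with hle | hle
      · have := Real.rpow_le_one (hnn ω) hle (hδpos k).le
        linarith [hnn ω]
      · have := Real.rpow_le_rpow_of_exponent_le hle (hδle k)
        rw [Real.rpow_one] at this
        linarith
    · rcases eq_or_lt_of_le (hnn ω) with h0 | h0
      · rw [← h0, Real.zero_rpow (hδpos k).ne']
        exact (Real.exp_pos _).le
      · rw [← Real.exp_log h0, ← Real.exp_mul, mul_comm (Real.log (W ω))]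
        exact Real.exp_le_exp.2 (mul_le_mul_of_nonneg_left (hlogW ω h0.ne') (hδpos k).le)
end
end

section
/- Let δ ∈ (0, 1) be such that q := E|φ₀ + b₀ ε₁|^δ < 1, and set K := E|μ₀ + ε₁|^δ (which is finite). Then for every t ∈ ℤ the series defining S_t converges absolutely almost surely, E|S_t − μ₀ − ε_t|^δ ≤ K q/(1 − q), and in particular E|S_t|^δ < ∞. -/
open MeasureTheory ProbabilityTheory Filter

noncomputable section

/-! ### Auxiliary lemmas -/

lemma my_rpow_add_le {δ : ℝ} (hδ : 0 ≤ δ) (hδ1 : δ ≤ 1) {a b : ℝ} (ha : 0 ≤ a) (hb : 0 ≤ b) :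
    (a + b) ^ δ ≤ a ^ δ + b ^ δ := by
  have h := NNReal.rpow_add_le_add_rpow a.toNNReal b.toNNReal hδ hδ1
  have h2 : ((a.toNNReal + b.toNNReal : NNReal) : ℝ) = a + b := by
    simp [Real.coe_toNNReal _ ha, Real.coe_toNNReal _ hb]
  calc (a + b) ^ δ = (((a.toNNReal + b.toNNReal : NNReal) : ℝ)) ^ δ := by rw [h2]
    _ = (((a.toNNReal + b.toNNReal) ^ δ : NNReal) : ℝ) := by
        rw [NNReal.coe_rpow]
    _ ≤ ((a.toNNReal ^ δ + b.toNNReal ^ δ : NNReal) : ℝ) := by exact_mod_cast h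
    _ = a ^ δ + b ^ δ := by
        push_cast [NNReal.coe_rpow]
        rw [Real.coe_toNNReal _ ha, Real.coe_toNNReal _ hb]

lemma my_rpow_sum_le {δ : ℝ} (hδ : 0 < δ) (hδ1 : δ ≤ 1) (n : ℕ) (g : ℕ → ℝ)
    (hg : ∀ i, 0 ≤ g i) :
    (∑ i ∈ Finset.range n, g i) ^ δ ≤ ∑ i ∈ Finset.range n, g i ^ δ := by
  induction n with
  | zero => simp [Real.zero_rpow hδ.ne']
  | succ n ih =>
    rw [Finset.sum_range_succ, Finset.sum_range_succ]
    calc (∑ i ∈ Finset.range n, g i + g n) ^ δ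
        ≤ (∑ i ∈ Finset.range n, g i) ^ δ + g n ^ δ :=
          my_rpow_add_le hδ.le hδ1 (Finset.sum_nonneg fun i _ => hg i) (hg n)
      _ ≤ ∑ i ∈ Finset.range n, g i ^ δ + g n ^ δ := add_le_add ih le_rfl

lemma my_tsum_rpow_le {δ : ℝ} (hδ : 0 < δ) (hδ1 : δ ≤ 1) {g : ℕ → ℝ} (hg : ∀ j, 0 ≤ g j)
    (hsum : Summable g) (hsum2 : Summable fun j => g j ^ δ) :
    (∑' j, g j) ^ δ ≤ ∑' j, g j ^ δ := by
  have hpartial : ∀ n, (∑ j ∈ Finset.range n, g j) ^ δ ≤ ∑' j, g j ^ δ := fun n =>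
    (my_rpow_sum_le hδ hδ1 n g hg).trans
      (Summable.sum_le_tsum (Finset.range n) (fun i _ => Real.rpow_nonneg (hg i) δ) hsum2)
  have h1 : Tendsto (fun n => (∑ j ∈ Finset.range n, g j) ^ δ) atTop (nhds ((∑' j, g j) ^ δ)) :=
    (hsum.hasSum.tendsto_sum_nat).rpow_const (Or.inr hδ.le)
  exact le_of_tendsto h1 (Eventually.of_forall hpartial)

lemma my_summable_abs_of_summable_rpow {δ : ℝ} (hδ : 0 < δ) (hδ1 : δ ≤ 1) {a : ℕ → ℝ}
    (h : Summable fun j => |a j| ^ δ) : Summable fun j => |a j| := by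
  have h0 : Tendsto (fun j => |a j| ^ δ) atTop (nhds 0) := h.tendsto_atTop_zero
  have hev : ∀ᶠ j in atTop, |a j| ^ δ < 1 := h0.eventually (gt_mem_nhds one_pos)
  obtain ⟨N, hN⟩ := eventually_atTop.mp hev
  have hle : ∀ j ≥ N, |a j| ≤ |a j| ^ δ := by
    intro j hj
    have hlt1 : |a j| ≤ 1 := by
      by_contra hc
      push_neg at hc
      have : (1 : ℝ) < |a j| ^ δ :=
        (Real.one_lt_rpow_iff_of_pos (by linarith)).mpr (Or.inl ⟨hc, hδ⟩)
      linarith [hN j hj]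
    rcases eq_or_lt_of_le (abs_nonneg (a j)) with h0' | h0'
    · rw [← h0', Real.zero_rpow hδ.ne']
    · calc |a j| = |a j| ^ (1 : ℝ) := (Real.rpow_one _).symm
        _ ≤ |a j| ^ δ := Real.rpow_le_rpow_of_exponent_ge h0' hlt1 hδ1
  have hshift : Summable fun j => |a (j + N)| := by
    apply Summable.of_nonneg_of_le (fun j => abs_nonneg _) (fun j => hle (j + N) (by omega))
    exact (summable_nat_add_iff N).mpr h
  exact (summable_nat_add_iff N).mp hshift

/-- `ℝ≥0∞`-valued factor functions. -/
def fFa (φ₀ b₀ δ : ℝ) (x : ℝ) : ENNReal := ENNReal.ofReal (|φ₀ + b₀ * x| ^ δ)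

def fGa (μ₀ δ : ℝ) (x : ℝ) : ENNReal := ENNReal.ofReal (|μ₀ + x| ^ δ)

lemma fFa_meas (φ₀ b₀ : ℝ) {δ : ℝ} (hδ : 0 ≤ δ) : Measurable (fFa φ₀ b₀ δ) := by
  unfold fFa
  exact Measurable.ennreal_ofReal
    ((Real.continuous_rpow_const hδ).measurable.comp
      (measurable_const.add (measurable_const.mul measurable_id)).abs)

lemma fGa_meas (μ₀ : ℝ) {δ : ℝ} (hδ : 0 ≤ δ) : Measurable (fGa μ₀ δ) := by
  unfold fGa
  exact Measurable.ennreal_ofReal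
    ((Real.continuous_rpow_const hδ).measurable.comp (measurable_const.add measurable_id).abs)

/-- `ℝ≥0∞`-valued version of `|blTerm| ^ δ`. -/
def blAux {Ω : Type*} (μ₀ φ₀ b₀ δ : ℝ) (ε : ℤ → Ω → ℝ) (t : ℤ) (j : ℕ) (ω : Ω) : ENNReal :=
  (∏ r ∈ Finset.range (j + 1), fFa φ₀ b₀ δ (ε (t - 2 * (r : ℤ) - 1) ω)) *
    fGa μ₀ δ (ε (t - 2 * ((j : ℤ) + 1)) ω)

lemma blAux_lintegral {Ω : Type*} [MeasurableSpace Ω] (P : Measure Ω) [IsProbabilityMeasure P]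
    (ε : ℤ → Ω → ℝ) (μ₀ φ₀ b₀ δ q K : ℝ) (hδ : 0 < δ)
    (hmeas : ∀ t, Measurable (ε t))
    (hindep : iIndepFun ε P)
    (hident : ∀ s t : ℤ, IdentDistrib (ε s) (ε t) P P)
    (hqint : Integrable (fun ω => |φ₀ + b₀ * ε 1 ω| ^ δ) P)
    (hq : ∫ ω, |φ₀ + b₀ * ε 1 ω| ^ δ ∂P = q)
    (hKint : Integrable (fun ω => |μ₀ + ε 1 ω| ^ δ) P)
    (hK : ∫ ω, |μ₀ + ε 1 ω| ^ δ ∂P = K) :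
    ∀ (j : ℕ) (t : ℤ),
      ∫⁻ ω, blAux μ₀ φ₀ b₀ δ ε t j ω ∂P = ENNReal.ofReal q ^ (j + 1) * ENNReal.ofReal K := by
  classical
  have hfF : Measurable (fFa φ₀ b₀ δ) := fFa_meas φ₀ b₀ hδ.le
  have hfG : Measurable (fGa μ₀ δ) := fGa_meas μ₀ hδ.le
  have hQ : ∀ s : ℤ, ∫⁻ ω, fFa φ₀ b₀ δ (ε s ω) ∂P = ENNReal.ofReal q := by
    intro s
    have h1 : IdentDistrib (fun ω => fFa φ₀ b₀ δ (ε s ω)) (fun ω => fFa φ₀ b₀ δ (ε 1 ω)) P P :=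
      (hident s 1).comp hfF
    rw [h1.lintegral_eq]
    simp only [fFa]
    rw [← hq, ← MeasureTheory.ofReal_integral_eq_lintegral_ofReal hqint
        (Eventually.of_forall fun ω => Real.rpow_nonneg (abs_nonneg _) δ)]
  have hKK : ∀ s : ℤ, ∫⁻ ω, fGa μ₀ δ (ε s ω) ∂P = ENNReal.ofReal K := by
    intro s
    have h1 : IdentDistrib (fun ω => fGa μ₀ δ (ε s ω)) (fun ω => fGa μ₀ δ (ε 1 ω)) P P :=
      (hident s 1).comp hfG
    rw [h1.lintegral_eq]
    simp only [fGa]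
    rw [← hK, ← MeasureTheory.ofReal_integral_eq_lintegral_ofReal hKint
        (Eventually.of_forall fun ω => Real.rpow_nonneg (abs_nonneg _) δ)]
  intro j
  induction j with
  | zero =>
    intro t
    have hind : IndepFun (fun ω => fFa φ₀ b₀ δ (ε (t - 1) ω))
        (fun ω => fGa μ₀ δ (ε (t - 2) ω)) P :=
      (hindep.indepFun (show (t - 1 : ℤ) ≠ t - 2 by omega)).comp hfF hfG
    have hcongr : ∫⁻ ω, blAux μ₀ φ₀ b₀ δ ε t 0 ω ∂P
        = ∫⁻ ω, fFa φ₀ b₀ δ (ε (t - 1) ω) * fGa μ₀ δ (ε (t - 2) ω) ∂P := by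
      apply lintegral_congr
      intro ω
      unfold blAux
      rw [Finset.prod_range_one]
      have i1 : t - 2 * ((0 : ℕ) : ℤ) - 1 = t - 1 := by push_cast; ring
      have i2 : t - 2 * (((0 : ℕ) : ℤ) + 1) = t - 2 := by push_cast; ring
      rw [i1, i2]
    rw [hcongr, lintegral_mul_eq_lintegral_mul_lintegral_of_indepFun''
      (f := fun ω => fFa φ₀ b₀ δ (ε (t - 1) ω)) (g := fun ω => fGa μ₀ δ (ε (t - 2) ω))
      ((hfF.comp (hmeas _)).aemeasurable) ((hfG.comp (hmeas _)).aemeasurable) hind,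
      hQ, hKK, pow_one]
  | succ j ih =>
    intro t
    have hsplit : ∀ ω, blAux μ₀ φ₀ b₀ δ ε t (j + 1) ω
        = fFa φ₀ b₀ δ (ε (t - 1) ω) * blAux μ₀ φ₀ b₀ δ ε (t - 2) j ω := by
      intro ω
      unfold blAux
      rw [Finset.prod_range_succ']
      have e1 : ∀ r ∈ Finset.range (j + 1),
          fFa φ₀ b₀ δ (ε (t - 2 * (((r + 1 : ℕ)) : ℤ) - 1) ω)
            = fFa φ₀ b₀ δ (ε ((t - 2) - 2 * (r : ℤ) - 1) ω) := by
        intro r _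
        have : t - 2 * (((r + 1 : ℕ)) : ℤ) - 1 = (t - 2) - 2 * (r : ℤ) - 1 := by push_cast; ring
        rw [this]
      rw [Finset.prod_congr rfl e1]
      have e0 : t - 2 * ((0 : ℕ) : ℤ) - 1 = t - 1 := by push_cast; ring
      have e2 : t - 2 * ((((j + 1 : ℕ)) : ℤ) + 1) = (t - 2) - 2 * ((j : ℤ) + 1) := by
        push_cast; ring
      rw [e0, e2]
      ring
    set S : Finset ℤ := {t - 1} with hS
    set T : Finset ℤ := Finset.Icc (t - 2 * (j : ℤ) - 6) (t - 3) with hT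
    have hST : Disjoint S T := by
      simp only [hS, hT, Finset.disjoint_left, Finset.mem_singleton, Finset.mem_Icc]
      rintro a rfl
      omega
    have hmem1 : t - 1 ∈ S := Finset.mem_singleton_self _
    have hmemG : (t - 2) - 2 * ((j : ℤ) + 1) ∈ T := by
      simp only [hT, Finset.mem_Icc]; omega
    have hmemF : ∀ r : ℕ, r ∈ Finset.range (j + 1) → (t - 2) - 2 * (r : ℤ) - 1 ∈ T := by
      intro r hr
      simp only [Finset.mem_range] at hr
      simp only [hT, Finset.mem_Icc]
      omega
    set X : Ω → (S → ℝ) := fun ω (i : S) => ε i ω with hX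
    set Y : Ω → (T → ℝ) := fun ω (i : T) => ε i ω with hY
    have hbase : IndepFun X Y P := hindep.indepFun_finset S T hST hmeas
    set φ₁ : (S → ℝ) → ENNReal := fun v => fFa φ₀ b₀ δ (v ⟨t - 1, hmem1⟩) with hφ₁
    set φ₂ : (T → ℝ) → ENNReal := fun v =>
      (∏ r ∈ (Finset.range (j + 1)).attach,
        fFa φ₀ b₀ δ (v ⟨(t - 2) - 2 * ((r : ℕ) : ℤ) - 1, hmemF r r.2⟩)) *
        fGa μ₀ δ (v ⟨(t - 2) - 2 * ((j : ℤ) + 1), hmemG⟩) with hφ₂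
    have hφ₁m : Measurable φ₁ := hfF.comp (measurable_pi_apply _)
    have hφ₂m : Measurable φ₂ := by
      apply Measurable.mul
      · exact Finset.measurable_prod _ fun r _ => hfF.comp (measurable_pi_apply _)
      · exact hfG.comp (measurable_pi_apply _)
    have hXm : Measurable X := measurable_pi_lambda _ fun i => hmeas i
    have hYm : Measurable Y := measurable_pi_lambda _ fun i => hmeas i
    have hcomp : IndepFun (φ₁ ∘ X) (φ₂ ∘ Y) P := hbase.comp hφ₁m hφ₂m
    have hYeq : ∀ ω, (φ₂ ∘ Y) ω = blAux μ₀ φ₀ b₀ δ ε (t - 2) j ω := by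
      intro ω
      show φ₂ (Y ω) = _
      unfold blAux
      rw [hφ₂]
      simp only [hY]
      rw [Finset.prod_attach (Finset.range (j + 1))
        (fun s : ℕ => fFa φ₀ b₀ δ (ε ((t - 2) - 2 * (s : ℤ) - 1) ω))]
    calc ∫⁻ ω, blAux μ₀ φ₀ b₀ δ ε t (j + 1) ω ∂P
        = ∫⁻ ω, (φ₁ ∘ X) ω * (φ₂ ∘ Y) ω ∂P := by
          apply lintegral_congr
          intro ω
          rw [hsplit ω, ← hYeq ω]
          rfl
      _ = (∫⁻ ω, (φ₁ ∘ X) ω ∂P) * ∫⁻ ω, (φ₂ ∘ Y) ω ∂P :=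
          lintegral_mul_eq_lintegral_mul_lintegral_of_indepFun''
            ((hφ₁m.comp hXm).aemeasurable) ((hφ₂m.comp hYm).aemeasurable) hcomp
      _ = ENNReal.ofReal q * (ENNReal.ofReal q ^ (j + 1) * ENNReal.ofReal K) := by
          rw [lintegral_congr hYeq, ih (t - 2)]
          congr 1
          exact hQ (t - 1)
      _ = ENNReal.ofReal q ^ (j + 1 + 1) * ENNReal.ofReal K := by ring

/-- if `q = E|φ₀+b₀ε₁|^δ < 1` and `K = E|μ₀+ε₁|^δ`, then for every `t` the series
defining `S_t` converges absolutely a.s., `E|S_t - μ₀ - ε_t|^δ ≤ K q/(1-q)`, and `E|S_t|^δ < ∞`. -/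
theorem bilinear_fractional_moment_bound
    {Ω : Type*} [MeasurableSpace Ω] (P : Measure Ω) [IsProbabilityMeasure P]
    (ε : ℤ → Ω → ℝ) (μ₀ φ₀ b₀ σ₀sq : ℝ)
    (hmeas : ∀ t, Measurable (ε t))
    (hindep : iIndepFun ε P)
    (hident : ∀ s t : ℤ, IdentDistrib (ε s) (ε t) P P)
    (hint : Integrable (ε 1) P) (hmean : ∫ ω, ε 1 ω ∂P = 0)
    (hsq : Integrable (fun ω => (ε 1 ω) ^ 2) P) (hvar : ∫ ω, (ε 1 ω) ^ 2 ∂P = σ₀sq)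
    (hσ : 0 < σ₀sq)
    (δ q K : ℝ) (hδ : 0 < δ) (hδ1 : δ < 1)
    (hqint : Integrable (fun ω => |φ₀ + b₀ * ε 1 ω| ^ δ) P)
    (hq : ∫ ω, |φ₀ + b₀ * ε 1 ω| ^ δ ∂P = q) (hq1 : q < 1)
    (hKint : Integrable (fun ω => |μ₀ + ε 1 ω| ^ δ) P)
    (hK : ∫ ω, |μ₀ + ε 1 ω| ^ δ ∂P = K) :
    ∀ t : ℤ,
      (∀ᵐ ω ∂P, Summable (fun j : ℕ => |blTerm μ₀ φ₀ b₀ ε t j ω|)) ∧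
      Integrable (fun ω => |∑' j : ℕ, blTerm μ₀ φ₀ b₀ ε t j ω| ^ δ) P ∧
      ∫ ω, |∑' j : ℕ, blTerm μ₀ φ₀ b₀ ε t j ω| ^ δ ∂P ≤ K * q / (1 - q) ∧
      Integrable (fun ω => |blS μ₀ φ₀ b₀ ε t ω| ^ δ) P := by
  classical
  have hq0 : 0 ≤ q := hq ▸ integral_nonneg fun ω => Real.rpow_nonneg (abs_nonneg _) δ
  have hK0 : 0 ≤ K := hK ▸ integral_nonneg fun ω => Real.rpow_nonneg (abs_nonneg _) δ
  have h1q : (0 : ℝ) < 1 - q := by linarith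
  have hC0 : 0 ≤ K * q / (1 - q) := div_nonneg (mul_nonneg hK0 hq0) h1q.le
  have key := blAux_lintegral P ε μ₀ φ₀ b₀ δ q K hδ hmeas hindep hident hqint hq hKint hK
  have habsδ : Measurable fun x : ℝ => |x| ^ δ :=
    (Real.continuous_rpow_const hδ.le).measurable.comp measurable_abs
  intro t
  have hblMeas : ∀ j, Measurable (fun ω => blTerm μ₀ φ₀ b₀ ε t j ω) := by
    intro j
    unfold blTerm
    exact (Finset.measurable_prod _ fun r _ =>
      measurable_const.add (measurable_const.mul (hmeas _))).mul
      (measurable_const.add (hmeas _))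
  have hHmeas : ∀ j : ℕ, Measurable fun ω => ENNReal.ofReal (|blTerm μ₀ φ₀ b₀ ε t j ω| ^ δ) :=
    fun j => Measurable.ennreal_ofReal (habsδ.comp (hblMeas j))
  have hHA : ∀ (j : ℕ) (ω : Ω),
      ENNReal.ofReal (|blTerm μ₀ φ₀ b₀ ε t j ω| ^ δ) = blAux μ₀ φ₀ b₀ δ ε t j ω := by
    intro j ω
    unfold blTerm blAux fFa fGa
    rw [abs_mul, Finset.abs_prod,
      Real.mul_rpow (Finset.prod_nonneg fun i _ => abs_nonneg _) (abs_nonneg _),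
      ← Real.finset_prod_rpow _ _ (fun i _ => abs_nonneg _) δ,
      ENNReal.ofReal_mul (Finset.prod_nonneg fun i _ => Real.rpow_nonneg (abs_nonneg _) _),
      ENNReal.ofReal_prod_of_nonneg (fun i _ => Real.rpow_nonneg (abs_nonneg _) _)]
  have hlin : ∫⁻ ω, ∑' j : ℕ, ENNReal.ofReal (|blTerm μ₀ φ₀ b₀ ε t j ω| ^ δ) ∂P
      ≤ ENNReal.ofReal (K * q / (1 - q)) := by
    rw [lintegral_tsum fun j => (hHmeas j).aemeasurable]
    have hval : ∀ j : ℕ, ∫⁻ ω, ENNReal.ofReal (|blTerm μ₀ φ₀ b₀ ε t j ω| ^ δ) ∂P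
        = ENNReal.ofReal q ^ (j + 1) * ENNReal.ofReal K := by
      intro j
      rw [lintegral_congr fun ω => hHA j ω]
      exact key j t
    rw [tsum_congr hval, ENNReal.tsum_mul_right]
    have hgeo : ∑' j : ℕ, ENNReal.ofReal q ^ (j + 1)
        = ENNReal.ofReal q * (1 - ENNReal.ofReal q)⁻¹ := by
      have : ∀ j : ℕ, ENNReal.ofReal q ^ (j + 1) = ENNReal.ofReal q * ENNReal.ofReal q ^ j := by
        intro j; rw [pow_succ]; ring
      rw [tsum_congr this, ENNReal.tsum_mul_left, ENNReal.tsum_geometric]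
    rw [hgeo]
    have hsub : (1 : ENNReal) - ENNReal.ofReal q = ENNReal.ofReal (1 - q) := by
      rw [ENNReal.ofReal_sub 1 hq0, ENNReal.ofReal_one]
    rw [hsub, ← ENNReal.ofReal_inv_of_pos h1q, ← ENNReal.ofReal_mul hq0,
      ← ENNReal.ofReal_mul (mul_nonneg hq0 (inv_nonneg.mpr h1q.le))]
    apply le_of_eq
    congr 1
    field_simp
  have hlt : ∫⁻ ω, ∑' j : ℕ, ENNReal.ofReal (|blTerm μ₀ φ₀ b₀ ε t j ω| ^ δ) ∂P < ⊤ :=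
    lt_of_le_of_lt hlin ENNReal.ofReal_lt_top
  have haefin : ∀ᵐ ω ∂P, ∑' j : ℕ, ENNReal.ofReal (|blTerm μ₀ φ₀ b₀ ε t j ω| ^ δ) < ⊤ :=
    ae_lt_top (Measurable.ennreal_tsum hHmeas) hlt.ne
  have haesum2 : ∀ᵐ ω ∂P, Summable fun j : ℕ => |blTerm μ₀ φ₀ b₀ ε t j ω| ^ δ := by
    filter_upwards [haefin] with ω hω
    have hs := ENNReal.summable_toReal hω.ne
    refine hs.congr fun j => ?_
    rw [ENNReal.toReal_ofReal (Real.rpow_nonneg (abs_nonneg _) _)]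
  have haesum1 : ∀ᵐ ω ∂P, Summable fun j : ℕ => |blTerm μ₀ φ₀ b₀ ε t j ω| := by
    filter_upwards [haesum2] with ω hω
    exact my_summable_abs_of_summable_rpow hδ hδ1.le hω
  set Tf : Ω → ℝ := fun ω => ∑' j : ℕ, blTerm μ₀ φ₀ b₀ ε t j ω with hTf
  have hTsm : AEStronglyMeasurable Tf P := by
    apply aestronglyMeasurable_of_tendsto_ae (u := atTop)
      (f := fun n ω => ∑ j ∈ Finset.range n, blTerm μ₀ φ₀ b₀ ε t j ω)
    · intro n
      exact (Finset.measurable_sum _ fun j _ => hblMeas j).aestronglyMeasurable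
    · filter_upwards [haesum1] with ω hω
      exact (hω.of_abs).hasSum.tendsto_sum_nat
  have hptw : ∀ᵐ ω ∂P, ENNReal.ofReal (|Tf ω| ^ δ)
      ≤ ∑' j : ℕ, ENNReal.ofReal (|blTerm μ₀ φ₀ b₀ ε t j ω| ^ δ) := by
    filter_upwards [haesum1, haesum2] with ω h1 h2
    have habs : |Tf ω| ≤ ∑' j : ℕ, |blTerm μ₀ φ₀ b₀ ε t j ω| := by
      have hsn : Summable fun j : ℕ => ‖blTerm μ₀ φ₀ b₀ ε t j ω‖ := by
        simpa only [Real.norm_eq_abs] using h1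
      have hle := norm_tsum_le_tsum_norm (f := fun j : ℕ => blTerm μ₀ φ₀ b₀ ε t j ω) hsn
      simpa only [Real.norm_eq_abs] using hle
    have h3 : |Tf ω| ^ δ ≤ (∑' j : ℕ, |blTerm μ₀ φ₀ b₀ ε t j ω|) ^ δ :=
      Real.rpow_le_rpow (abs_nonneg _) habs hδ.le
    have h4 : (∑' j : ℕ, |blTerm μ₀ φ₀ b₀ ε t j ω|) ^ δ
        ≤ ∑' j : ℕ, |blTerm μ₀ φ₀ b₀ ε t j ω| ^ δ :=
      my_tsum_rpow_le hδ hδ1.le (fun j => abs_nonneg _) h1 h2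
    calc ENNReal.ofReal (|Tf ω| ^ δ)
        ≤ ENNReal.ofReal (∑' j : ℕ, |blTerm μ₀ φ₀ b₀ ε t j ω| ^ δ) :=
          ENNReal.ofReal_le_ofReal (h3.trans h4)
      _ = ∑' j : ℕ, ENNReal.ofReal (|blTerm μ₀ φ₀ b₀ ε t j ω| ^ δ) :=
          ENNReal.ofReal_tsum_of_nonneg (fun j => Real.rpow_nonneg (abs_nonneg _) _) h2
  have hTlin : ∫⁻ ω, ENNReal.ofReal (|Tf ω| ^ δ) ∂P ≤ ENNReal.ofReal (K * q / (1 - q)) :=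
    (lintegral_mono_ae hptw).trans hlin
  have hTδsm : AEStronglyMeasurable (fun ω => |Tf ω| ^ δ) P :=
    (habsδ.comp_aemeasurable hTsm.aemeasurable).aestronglyMeasurable
  have hTint : Integrable (fun ω => |Tf ω| ^ δ) P := by
    refine ⟨hTδsm, ?_⟩
    rw [hasFiniteIntegral_iff_ofReal
      (Eventually.of_forall fun ω => Real.rpow_nonneg (abs_nonneg _) _)]
    exact lt_of_le_of_lt hTlin ENNReal.ofReal_lt_top
  have hTbound : ∫ ω, |Tf ω| ^ δ ∂P ≤ K * q / (1 - q) := by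
    rw [integral_eq_lintegral_of_nonneg_ae
      (Eventually.of_forall fun ω => Real.rpow_nonneg (abs_nonneg _) _) hTδsm]
    exact ENNReal.toReal_le_of_le_ofReal hC0 hTlin
  have hGR : Measurable fun x : ℝ => |μ₀ + x| ^ δ :=
    habsδ.comp (measurable_const.add measurable_id)
  have hBint : Integrable (fun ω => |μ₀ + ε t ω| ^ δ) P :=
    ((hident t 1).comp hGR).integrable_iff.mpr hKint
  have hSint : Integrable (fun ω => |blS μ₀ φ₀ b₀ ε t ω| ^ δ) P := by
    have hSm : AEStronglyMeasurable (blS μ₀ φ₀ b₀ ε t) P := by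
      have : blS μ₀ φ₀ b₀ ε t = fun ω => (μ₀ + ε t ω) + Tf ω := by
        funext ω; rfl
      rw [this]
      exact ((measurable_const.add (hmeas t)).aestronglyMeasurable).add hTsm
    have hsm : AEStronglyMeasurable (fun ω => |blS μ₀ φ₀ b₀ ε t ω| ^ δ) P :=
      (habsδ.comp_aemeasurable hSm.aemeasurable).aestronglyMeasurable
    refine Integrable.mono' (hBint.add hTint) hsm ?_
    filter_upwards with ω
    rw [Real.norm_eq_abs, abs_of_nonneg (Real.rpow_nonneg (abs_nonneg _) _)]
    have h5 : |blS μ₀ φ₀ b₀ ε t ω| ≤ |μ₀ + ε t ω| + |Tf ω| := by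
      have : blS μ₀ φ₀ b₀ ε t ω = (μ₀ + ε t ω) + Tf ω := rfl
      rw [this]
      exact abs_add_le _ _
    calc |blS μ₀ φ₀ b₀ ε t ω| ^ δ ≤ (|μ₀ + ε t ω| + |Tf ω|) ^ δ :=
        Real.rpow_le_rpow (abs_nonneg _) h5 hδ.le
      _ ≤ |μ₀ + ε t ω| ^ δ + |Tf ω| ^ δ :=
        my_rpow_add_le hδ.le hδ1.le (abs_nonneg _) (abs_nonneg _)
  exact ⟨haesum1, hTint, hTbound, hSint⟩
end
end

section
/- Let b ≠ 0 be a real number and δ ∈ (0, 1]. Then for all real numbers x and y, |x/(1 + b²x²) − y/(1 + b²y²)| ≤ 4 |b|^{δ−1} |x − y|^δ. -/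
/-- for `b ≠ 0` and `δ ∈ (0,1]`,
`|x/(1+b²x²) - y/(1+b²y²)| ≤ 4 |b|^{δ-1} |x-y|^δ` for all real `x, y`. -/
theorem abs_div_one_add_sq_sub_le (b δ : ℝ) (hb : b ≠ 0) (hδ : 0 < δ) (hδ1 : δ ≤ 1) :
    ∀ x y : ℝ,
      |x / (1 + b ^ 2 * x ^ 2) - y / (1 + b ^ 2 * y ^ 2)| ≤
        4 * |b| ^ (δ - 1) * |x - y| ^ δ := by
  intro x y
  have hb2 : (0:ℝ) < b ^ 2 := by positivity
  have hbabs : (0:ℝ) < |b| := abs_pos.mpr hb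
  have hdx : (0:ℝ) < 1 + b ^ 2 * x ^ 2 := by positivity
  have hdy : (0:ℝ) < 1 + b ^ 2 * y ^ 2 := by positivity
  set A := |x / (1 + b ^ 2 * x ^ 2) - y / (1 + b ^ 2 * y ^ 2)| with hA
  have hA0 : 0 ≤ A := abs_nonneg _
  -- Lipschitz bound
  have h1 : A ≤ |x - y| := by
    have key : x / (1 + b ^ 2 * x ^ 2) - y / (1 + b ^ 2 * y ^ 2)
        = ((x - y) * (1 - b ^ 2 * (x * y))) / ((1 + b ^ 2 * x ^ 2) * (1 + b ^ 2 * y ^ 2)) := by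
      field_simp
      ring
    rw [hA, key, abs_div, abs_mul]
    rw [abs_of_pos (by positivity : (0:ℝ) < (1 + b ^ 2 * x ^ 2) * (1 + b ^ 2 * y ^ 2))]
    rw [div_le_iff₀ (by positivity)]
    have h2 : |1 - b ^ 2 * (x * y)| ≤ (1 + b ^ 2 * x ^ 2) * (1 + b ^ 2 * y ^ 2) := by
      rw [abs_le]
      constructor <;> nlinarith [sq_nonneg (x + y), sq_nonneg (x - y), sq_nonneg (b * x * y),
        sq_nonneg (b^2 * x * y)]
    nlinarith [abs_nonneg (x - y), abs_nonneg (1 - b ^ 2 * (x * y))]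
  -- boundedness
  have hbound : ∀ z : ℝ, |z / (1 + b ^ 2 * z ^ 2)| ≤ 1 / (2 * |b|) := by
    intro z
    have hdz : (0:ℝ) < 1 + b ^ 2 * z ^ 2 := by positivity
    rw [abs_div, abs_of_pos hdz, div_le_div_iff₀ hdz (by positivity)]
    nlinarith [sq_nonneg (|b| * |z| - 1), sq_abs b, sq_abs z, abs_mul b z]
  have h2 : A ≤ |b|⁻¹ := by
    calc A ≤ |x / (1 + b ^ 2 * x ^ 2)| + |y / (1 + b ^ 2 * y ^ 2)| := abs_sub _ _
    _ ≤ 1 / (2 * |b|) + 1 / (2 * |b|) := add_le_add (hbound x) (hbound y)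
    _ = |b|⁻¹ := by rw [← add_div]; rw [show (1:ℝ)+1 = 2 by norm_num]; field_simp
  -- interpolation
  have hsplit : A = A ^ δ * A ^ (1 - δ) := by
    rw [← Real.rpow_add' hA0 (by norm_num)]
    norm_num
  have hle1 : A ^ δ ≤ |x - y| ^ δ := Real.rpow_le_rpow hA0 h1 hδ.le
  have hle2 : A ^ (1 - δ) ≤ (|b|⁻¹) ^ (1 - δ) :=
    Real.rpow_le_rpow hA0 h2 (by linarith)
  have hinv : (|b|⁻¹) ^ (1 - δ) = |b| ^ (δ - 1) := by
    rw [← Real.rpow_neg_one |b|, ← Real.rpow_mul hbabs.le]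
    ring_nf
  calc A = A ^ δ * A ^ (1 - δ) := hsplit
  _ ≤ |x - y| ^ δ * (|b|⁻¹) ^ (1 - δ) := by
      apply mul_le_mul hle1 hle2 (Real.rpow_nonneg hA0 _) (Real.rpow_nonneg (abs_nonneg _) _)
  _ = |b| ^ (δ - 1) * |x - y| ^ δ := by rw [hinv]; ring
  _ ≤ 4 * |b| ^ (δ - 1) * |x - y| ^ δ := by
      have := Real.rpow_nonneg hbabs.le (δ - 1)
      have := Real.rpow_nonneg (abs_nonneg (x - y)) δ
      nlinarith
end

section
/- Assume E|Y|^δ < ∞ for some δ ∈ (0, 1), assume θ₀ = (μ₀, φ₀, σ₀², b₀²) ∈ Θ (in particular b₀² ≥ α̲ > 0), and assume Y is nondegenerate in the sense that P(Y = c) < 1 for every real c and P(Y² = c) < 1 for every real c. Then for every θ = (μ, φ, s, β) ∈ Θ the expectation E ℓ(θ) is finite, E ℓ(θ) ≤ E ℓ(θ₀), and equality E ℓ(θ) = E ℓ(θ₀) holds if and only if θ = θ₀, i.e. μ = μ₀, φ = φ₀, s = σ₀² and β = b₀². In other words, θ ↦ E ℓ(θ) achieves its unique maximum over Θ at θ₀.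 -/
open MeasureTheory ProbabilityTheory

noncomputable section

/-- The Gaussian quasi-log-likelihood
`ℓ(θ) = -(1/2)[log(s(1+βY²)) + (Z-μ-φY)²/(s(1+βY²))]` for `θ = (μ, φ, s, β)`. -/
def qll {Ω : Type*} (Y Z : Ω → ℝ) (θ : ℝ × ℝ × ℝ × ℝ) (ω : Ω) : ℝ :=
  -(1 / 2) * (Real.log (θ.2.2.1 * (1 + θ.2.2.2 * Y ω ^ 2)) +
    (Z ω - θ.1 - θ.2.1 * Y ω) ^ 2 / (θ.2.2.1 * (1 + θ.2.2.2 * Y ω ^ 2)))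

/-- The parameter space `Θ = {(μ,φ,s,β) : |μ| ≤ μ̄, |φ| ≤ φ̄, ω̲ ≤ s ≤ ω̄, α̲ ≤ β ≤ ᾱ}`. -/
def Theta (μb φb ωl ωu αl αu : ℝ) : Set (ℝ × ℝ × ℝ × ℝ) :=
  {θ | |θ.1| ≤ μb ∧ |θ.2.1| ≤ φb ∧ ωl ≤ θ.2.2.1 ∧ θ.2.2.1 ≤ ωu ∧
    αl ≤ θ.2.2.2 ∧ θ.2.2.2 ≤ αu}

section Aux
variable {Ω : Type*} [MeasurableSpace Ω]



lemma kl_ineq (v v₀ m : ℝ) (hv : 0 < v) (hv₀ : 0 < v₀) :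
    Real.log v₀ + 1 ≤ Real.log v + (m ^ 2 + v₀) / v ∧
    (Real.log v₀ + 1 = Real.log v + (m ^ 2 + v₀) / v ↔ m = 0 ∧ v = v₀) := by
  have h1 : Real.log (v₀ / v) = Real.log v₀ - Real.log v :=
    Real.log_div (ne_of_gt hv₀) (ne_of_gt hv)
  have hle : Real.log (v₀ / v) ≤ v₀ / v - 1 := Real.log_le_sub_one_of_pos (by positivity)
  have hm : 0 ≤ m ^ 2 / v := by positivity
  have hsplit : (m ^ 2 + v₀) / v = m ^ 2 / v + v₀ / v := add_div _ _ _
  constructor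
  · linarith
  constructor
  · intro heq
    have hmz : m = 0 := by
      by_contra hm0
      have : 0 < m ^ 2 / v := div_pos (by positivity) hv
      linarith
    refine ⟨hmz, ?_⟩
    by_contra hvz
    have hne1 : v₀ / v ≠ 1 := by
      intro hc
      exact hvz ((div_eq_one_iff_eq (ne_of_gt hv)).mp hc).symm
    have hlt : Real.log (v₀ / v) < v₀ / v - 1 :=
      Real.log_lt_sub_one_of_pos (by positivity) hne1
    have : m ^ 2 / v = 0 := by rw [hmz]; simp
    linarith
  · rintro ⟨rfl, rfl⟩
    have h0 : (0:ℝ) ^ 2 + v = v := by ring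
    rw [h0, div_self (ne_of_gt hv)]

lemma log_growth_bound (δ : ℝ) (hδ : 0 < δ) (s β y : ℝ) (hs : 0 < s) (hβ : 0 < β) :
    |Real.log (s * (1 + β * y ^ 2))| ≤
      |Real.log s| + Real.log (1 + β) + Real.log 2 + (2 / δ) * |y| ^ δ := by
  have h1 : (0:ℝ) < 1 + β * y ^ 2 := by positivity
  have hδy : (0:ℝ) ≤ |y| ^ δ := Real.rpow_nonneg (abs_nonneg y) δ
  have hlb : 0 ≤ Real.log (1 + β * y ^ 2) := Real.log_nonneg (by nlinarith [sq_nonneg y])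
  have key : Real.log (1 + β * y ^ 2) ≤ Real.log (1 + β) + Real.log 2 + (2 / δ) * |y| ^ δ := by
    have step1 : Real.log (1 + β * y ^ 2) ≤ Real.log (1 + β) + Real.log (1 + y ^ 2) := by
      rw [← Real.log_mul (by positivity) (by positivity)]
      apply Real.log_le_log h1
      nlinarith [sq_nonneg y]
    have step2 : Real.log (1 + y ^ 2) ≤ Real.log 2 + (2 / δ) * |y| ^ δ := by
      rcases le_or_gt (|y|) 1 with h | h
      · have hy2 : y ^ 2 ≤ 1 := by nlinarith [sq_abs y, abs_nonneg y]
        have : Real.log (1 + y ^ 2) ≤ Real.log 2 := by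
          apply Real.log_le_log (by positivity); linarith
        have hpos : 0 ≤ (2 / δ) * |y| ^ δ := by positivity
        linarith
      · have hy0 : (0:ℝ) < |y| := lt_trans one_pos h
        have hy1 : (1:ℝ) ≤ y ^ 2 := by nlinarith [sq_abs y]
        have h2 : Real.log (1 + y ^ 2) ≤ Real.log (2 * y ^ 2) := by
          apply Real.log_le_log (by positivity); linarith
        have h3 : Real.log (2 * y ^ 2) = Real.log 2 + 2 * Real.log |y| := by
          rw [Real.log_mul two_ne_zero (by positivity), ← sq_abs y, Real.log_pow]
          push_cast; ring
        have h4 : δ * Real.log |y| ≤ |y| ^ δ := by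
          have := Real.log_rpow hy0 δ
          have h5 : Real.log (|y| ^ δ) ≤ |y| ^ δ - 1 :=
            Real.log_le_sub_one_of_pos (Real.rpow_pos_of_pos hy0 δ)
          linarith [this ▸ h5]
        have h6 : 2 * Real.log |y| ≤ (2 / δ) * |y| ^ δ := by
          rw [div_mul_eq_mul_div, le_div_iff₀ hδ]
          nlinarith
        linarith
    linarith
  rw [Real.log_mul (ne_of_gt hs) (ne_of_gt h1)]
  calc |Real.log s + Real.log (1 + β * y ^ 2)|
      ≤ |Real.log s| + |Real.log (1 + β * y ^ 2)| := abs_add_le _ _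
    _ = |Real.log s| + Real.log (1 + β * y ^ 2) := by rw [abs_of_nonneg hlb]
    _ ≤ _ := by linarith

lemma ratio_bd {s β : ℝ} (hs : 0 < s) (hβ : 0 < β) (A n y : ℝ) (hn : |n| ≤ A * (1 + y ^ 2)) :
    |n / (s * (1 + β * y ^ 2))| ≤ A * max 1 β⁻¹ / s := by
  have hA : 0 ≤ A := by nlinarith [abs_nonneg n, sq_nonneg y]
  have hK1 : (1:ℝ) ≤ max 1 β⁻¹ := le_max_left _ _
  have hKβ : (1:ℝ) ≤ max 1 β⁻¹ * β := by
    calc (1:ℝ) = β⁻¹ * β := (inv_mul_cancel₀ (ne_of_gt hβ)).symm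
    _ ≤ max 1 β⁻¹ * β := by
        apply mul_le_mul_of_nonneg_right (le_max_right _ _) (le_of_lt hβ)
  have hd : 0 < s * (1 + β * y ^ 2) := by positivity
  have h2 : |n| ≤ A * max 1 β⁻¹ * (1 + β * y ^ 2) := by
    nlinarith [sq_nonneg y, mul_nonneg hA (sq_nonneg y), abs_nonneg n]
  rw [abs_div, abs_of_pos hd, div_le_iff₀ hd]
  have heq : A * max 1 β⁻¹ / s * (s * (1 + β * y ^ 2)) = A * max 1 β⁻¹ * (1 + β * y ^ 2) := by
    field_simp
  rw [heq]
  exact h2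




lemma integrable_of_bdd (P : Measure Ω) [IsProbabilityMeasure P] {f : Ω → ℝ}
    (hm : AEStronglyMeasurable f P) (C : ℝ) (hC : ∀ ω, |f ω| ≤ C) : Integrable f P :=
  Integrable.mono' (integrable_const C) hm
    (Filter.Eventually.of_forall (by simpa [Real.norm_eq_abs] using hC))

lemma indep_integral_mul_zero (P : Measure Ω) [IsProbabilityMeasure P]
    {Y h : Ω → ℝ} (hYh : IndepFun Y h P) (hY : Measurable Y)
    (hh : AEStronglyMeasurable h P)
    (g : ℝ → ℝ) (hg : Measurable g) (hmean : ∫ ω, h ω ∂P = 0) :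
    ∫ ω, g (Y ω) * h ω ∂P = 0 := by
  have h2 : IndepFun (g ∘ Y) h P := hYh.comp hg measurable_id
  have h3 := h2.integral_mul_eq_mul_integral ((hg.comp hY).aestronglyMeasurable) hh
  simpa [Function.comp, hmean] using h3

lemma affine_ae_zero (P : Measure Ω) [IsProbabilityMeasure P]
    {X : Ω → ℝ} (hX : Measurable X) (hnd : ∀ c : ℝ, P {ω | X ω = c} < 1)
    (a b : ℝ) (h : ∀ᵐ ω ∂P, a + b * X ω = 0) : a = 0 ∧ b = 0 := by
  have hne : (MeasureTheory.ae P).NeBot := ae_neBot.mpr (IsProbabilityMeasure.ne_zero P)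
  by_cases hb : b = 0
  · subst hb
    obtain ⟨ω, hω⟩ := h.exists
    constructor
    · simpa using hω
    · rfl
  · exfalso
    have h2 : ∀ᵐ ω ∂P, X ω = -a / b := by
      filter_upwards [h] with ω hω
      field_simp
      linarith
    have hms : MeasurableSet {ω | X ω = -a / b} := hX (measurableSet_singleton _)
    have h3 : P {ω | X ω = -a / b}ᶜ = 0 := by
      rw [ae_iff] at h2
      exact h2
    rw [prob_compl_eq_zero_iff hms] at h3
    exact absurd h3 (hnd _).ne

lemma log_term_integrable (P : Measure Ω) [IsProbabilityMeasure P]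
    {Y : Ω → ℝ} (hYm : Measurable Y) (δ : ℝ) (hδ : 0 < δ)
    (hYδ : Integrable (fun ω => |Y ω| ^ δ) P)
    (s β : ℝ) (hs : 0 < s) (hβ : 0 < β) :
    Integrable (fun ω => Real.log (s * (1 + β * Y ω ^ 2))) P := by
  have hmeas : AEStronglyMeasurable (fun ω => Real.log (s * (1 + β * Y ω ^ 2))) P := by
    apply Measurable.aestronglyMeasurable
    exact (Real.measurable_log.comp
      (measurable_const.mul ((measurable_const.add (measurable_const.mul ((hYm.pow_const 2)))))))
  have hg : Integrable
      (fun ω => (|Real.log s| + Real.log (1 + β) + Real.log 2) + (2 / δ) * |Y ω| ^ δ) P :=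
    (integrable_const _).add (hYδ.const_mul (2 / δ))
  apply Integrable.mono' hg hmeas
  exact Filter.Eventually.of_forall fun ω => by
    rw [Real.norm_eq_abs]
    linarith [log_growth_bound δ hδ s β (Y ω) hs hβ]


lemma abs_le_one_add_sq (y : ℝ) : |y| ≤ 1 + y ^ 2 := by
  nlinarith [sq_abs y, sq_nonneg (|y| - 1), abs_nonneg y]

lemma F_integrable (P : Measure Ω) [IsProbabilityMeasure P]
    {Y : Ω → ℝ} (hYm : Measurable Y) (δ : ℝ) (hδ : 0 < δ)
    (hYδ : Integrable (fun ω => |Y ω| ^ δ) P)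
    (c d σ₀sq b₀ s β : ℝ) (hs : 0 < s) (hβ : 0 < β) (hσ0 : 0 ≤ σ₀sq) :
    Integrable (fun ω => Real.log (s * (1 + β * Y ω ^ 2)) +
      ((c + d * Y ω) ^ 2 + σ₀sq * (1 + b₀ ^ 2 * Y ω ^ 2)) / (s * (1 + β * Y ω ^ 2))) P := by
  apply (log_term_integrable P hYm δ hδ hYδ s β hs hβ).add
  have hmeas : AEStronglyMeasurable
      (fun ω => ((c + d * Y ω) ^ 2 + σ₀sq * (1 + b₀ ^ 2 * Y ω ^ 2)) / (s * (1 + β * Y ω ^ 2))) P := by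
    apply Measurable.aestronglyMeasurable
    apply Measurable.div
    · exact ((measurable_const.add (measurable_const.mul hYm)).pow_const 2).add
        (measurable_const.mul (measurable_const.add (measurable_const.mul (hYm.pow_const 2))))
    · exact measurable_const.mul (measurable_const.add (measurable_const.mul (hYm.pow_const 2)))
  refine integrable_of_bdd P hmeas ((2 * c ^ 2 + 2 * d ^ 2 + σ₀sq * (1 + b₀ ^ 2)) * max 1 β⁻¹ / s)
    fun ω => ?_
  apply ratio_bd hs hβ
  have h1 : (c + d * Y ω) ^ 2 ≤ (2 * c ^ 2 + 2 * d ^ 2) * (1 + Y ω ^ 2) := by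
    nlinarith [sq_nonneg (c - d * Y ω), sq_nonneg (Y ω), sq_nonneg c, sq_nonneg d,
      sq_nonneg (c * Y ω), sq_nonneg (d * Y ω)]
  have h2 : σ₀sq * (1 + b₀ ^ 2 * Y ω ^ 2) ≤ σ₀sq * (1 + b₀ ^ 2) * (1 + Y ω ^ 2) := by
    nlinarith [sq_nonneg (Y ω), sq_nonneg b₀, mul_nonneg hσ0 (sq_nonneg b₀),
      mul_nonneg (mul_nonneg hσ0 (sq_nonneg b₀)) (sq_nonneg (Y ω))]
  have hnn : 0 ≤ (c + d * Y ω) ^ 2 + σ₀sq * (1 + b₀ ^ 2 * Y ω ^ 2) := by positivity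
  rw [abs_of_nonneg hnn]
  nlinarith [h1, h2]

lemma corr_term (P : Measure Ω) [IsProbabilityMeasure P] {Y h : Ω → ℝ}
    (hYm : Measurable Y) (hYh : IndepFun Y h P) (hhm : Measurable h)
    (hhint : Integrable h P) (hmean : ∫ ω, h ω ∂P = 0)
    (g : ℝ → ℝ) (hg : Measurable g) (C : ℝ) (hgb : ∀ y, |g y| ≤ C) (k : ℝ) :
    Integrable (fun ω => k * (g (Y ω) * h ω)) P ∧ ∫ ω, k * (g (Y ω) * h ω) ∂P = 0 := by
  have h1 : Integrable (fun ω => g (Y ω) * h ω) P :=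
    Integrable.bdd_mul hhint ((hg.comp hYm).aestronglyMeasurable)
      (Filter.Eventually.of_forall fun ω => by rw [Real.norm_eq_abs]; exact hgb (Y ω))
  refine ⟨h1.const_mul k, ?_⟩
  rw [integral_const_mul, indep_integral_mul_zero P hYh hYm hhm.aestronglyMeasurable g hg hmean,
    mul_zero]

set_option maxHeartbeats 2000000 in
lemma qll_aux (P : Measure Ω) [IsProbabilityMeasure P]
    (Y ε ε' : Ω → ℝ) (hYm : Measurable Y) (hε : Measurable ε) (hε' : Measurable ε')
    (hindep : iIndepFun ![Y, ε, ε'] P)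
    (μ₀ φ₀ b₀ σ₀sq : ℝ)
    (hεint : Integrable ε P) (hεmean : ∫ ω, ε ω ∂P = 0)
    (hε'int : Integrable ε' P) (hε'mean : ∫ ω, ε' ω ∂P = 0)
    (hεsq : Integrable (fun ω => ε ω ^ 2) P) (hεvar : ∫ ω, ε ω ^ 2 ∂P = σ₀sq)
    (hε'sq : Integrable (fun ω => ε' ω ^ 2) P) (hε'var : ∫ ω, ε' ω ^ 2 ∂P = σ₀sq)
    (hσ0 : 0 ≤ σ₀sq)
    (δ : ℝ) (hδ : 0 < δ) (hYδ : Integrable (fun ω => |Y ω| ^ δ) P)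
    (μ φ s β : ℝ) (hs : 0 < s) (hβ : 0 < β) :
    Integrable (qll Y (fun ω => μ₀ + φ₀ * Y ω + b₀ * Y ω * ε' ω + ε ω) (μ, φ, s, β)) P ∧
    ∫ ω, qll Y (fun ω => μ₀ + φ₀ * Y ω + b₀ * Y ω * ε' ω + ε ω) (μ, φ, s, β) ω ∂P =
      -(1/2) * ∫ ω, (Real.log (s * (1 + β * Y ω ^ 2)) + ((μ₀ - μ + (φ₀ - φ) * Y ω) ^ 2 + σ₀sq * (1 + b₀ ^ 2 * Y ω ^ 2)) / (s * (1 + β * Y ω ^ 2))) ∂P := by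
  have hIYε : IndepFun Y ε P := by
    simpa using hindep.indepFun (show (0 : Fin 3) ≠ 1 by decide)
  have hIYε' : IndepFun Y ε' P := by
    simpa using hindep.indepFun (show (0 : Fin 3) ≠ 2 by decide)
  have hIεε' : IndepFun ε ε' P := by
    simpa using hindep.indepFun (show (1 : Fin 3) ≠ 2 by decide)
  have hmv : ∀ i, Measurable (![Y, ε, ε'] i) := by
    intro i; fin_cases i <;> simp [hYm, hε, hε']
  have hIYεε' : IndepFun Y (fun ω => ε ω * ε' ω) P := by
    have h1 := hindep.indepFun_prodMk hmv 1 2 0 (by decide) (by decide)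
    have h2 := h1.comp (measurable_fst.mul measurable_snd) measurable_id
    exact (by simpa [Function.comp_def] using h2.symm)
  have hIYε2 : IndepFun Y (fun ω => ε ω ^ 2 - σ₀sq) P := by
    have := hIYε.comp measurable_id
      (show Measurable fun x : ℝ => x ^ 2 - σ₀sq from (measurable_id.pow_const 2).sub measurable_const)
    simpa [Function.comp_def] using this
  have hIYε'2 : IndepFun Y (fun ω => ε' ω ^ 2 - σ₀sq) P := by
    have := hIYε'.comp measurable_id
      (show Measurable fun x : ℝ => x ^ 2 - σ₀sq from (measurable_id.pow_const 2).sub measurable_const)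
    simpa [Function.comp_def] using this
  have hm3 : ∫ ω, (ε' ω ^ 2 - σ₀sq) ∂P = 0 := by
    rw [integral_sub hε'sq (integrable_const _)]; simp [hε'var]
  have hm5 : ∫ ω, (ε ω ^ 2 - σ₀sq) ∂P = 0 := by
    rw [integral_sub hεsq (integrable_const _)]; simp [hεvar]
  have hm4 : ∫ ω, ε ω * ε' ω ∂P = 0 := by
    have := hIεε'.integral_mul_eq_mul_integral hε.aestronglyMeasurable hε'.aestronglyMeasurable
    simpa [hεmean] using this
  have hVm : Measurable fun y : ℝ => s * (1 + β * y ^ 2) :=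
    measurable_const.mul (measurable_const.add (measurable_const.mul (measurable_id.pow_const 2)))
  have hmy : Measurable fun y : ℝ => μ₀ - μ + (φ₀ - φ) * y :=
    measurable_const.add (measurable_const.mul measurable_id)
  have hg2m : Measurable fun y : ℝ => (μ₀ - μ + (φ₀ - φ) * y) * y / (s * (1 + β * y ^ 2)) := (hmy.mul measurable_id).div hVm
  have hg3m : Measurable fun y : ℝ => (μ₀ - μ + (φ₀ - φ) * y) / (s * (1 + β * y ^ 2)) := hmy.div hVm
  have hg4m : Measurable fun y : ℝ => y ^ 2 / (s * (1 + β * y ^ 2)) := (measurable_id.pow_const 2).div hVm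
  have hg5m : Measurable fun y : ℝ => y / (s * (1 + β * y ^ 2)) := measurable_id.div hVm
  have hg6m : Measurable fun y : ℝ => 1 / (s * (1 + β * y ^ 2)) := measurable_const.div hVm
  have habs : ∀ y : ℝ, |(μ₀ - μ + (φ₀ - φ) * y)| ≤ (|μ₀ - μ| + |φ₀ - φ|) * (1 + y ^ 2) := by
    intro y
    have h2 : |(μ₀ - μ + (φ₀ - φ) * y)| ≤ |μ₀ - μ| + |φ₀ - φ| * |y| := by
      calc |(μ₀ - μ + (φ₀ - φ) * y)| ≤ |μ₀ - μ| + |(φ₀ - φ) * y| := abs_add_le _ _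
        _ = |μ₀ - μ| + |φ₀ - φ| * |y| := by rw [abs_mul]
    nlinarith [abs_le_one_add_sq y, abs_nonneg y, abs_nonneg (μ₀ - μ), abs_nonneg (φ₀ - φ),
      sq_abs y, mul_le_mul_of_nonneg_left (abs_le_one_add_sq y) (abs_nonneg (φ₀ - φ))]
  have hg2b : ∀ y : ℝ, |(μ₀ - μ + (φ₀ - φ) * y) * y / (s * (1 + β * y ^ 2))| ≤
      (|μ₀ - μ| + |φ₀ - φ|) * max 1 β⁻¹ / s := by
    intro y
    apply ratio_bd hs hβ
    have h1 : |(μ₀ - μ + (φ₀ - φ) * y) * y| = |μ₀ - μ + (φ₀ - φ) * y| * |y| := abs_mul _ _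
    have h2 : |μ₀ - μ + (φ₀ - φ) * y| ≤ |μ₀ - μ| + |φ₀ - φ| * |y| := by
      calc |μ₀ - μ + (φ₀ - φ) * y| ≤ |μ₀ - μ| + |(φ₀ - φ) * y| := abs_add_le _ _
        _ = |μ₀ - μ| + |φ₀ - φ| * |y| := by rw [abs_mul]
    nlinarith [mul_le_mul_of_nonneg_right h2 (abs_nonneg y), abs_le_one_add_sq y,
      abs_nonneg y, abs_nonneg (μ₀ - μ), abs_nonneg (φ₀ - φ), sq_abs y,
      mul_le_mul_of_nonneg_left (abs_le_one_add_sq y) (abs_nonneg (μ₀ - μ))]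
  have hg3b : ∀ y : ℝ, |(μ₀ - μ + (φ₀ - φ) * y) / (s * (1 + β * y ^ 2))| ≤ (|μ₀ - μ| + |φ₀ - φ|) * max 1 β⁻¹ / s :=
    fun y => ratio_bd hs hβ _ _ y (habs y)
  have hg4b : ∀ y : ℝ, |y ^ 2 / (s * (1 + β * y ^ 2))| ≤ 1 * max 1 β⁻¹ / s := by
    intro y
    apply ratio_bd hs hβ
    rw [abs_of_nonneg (sq_nonneg y)]; nlinarith [sq_nonneg y]
  have hg5b : ∀ y : ℝ, |y / (s * (1 + β * y ^ 2))| ≤ 1 * max 1 β⁻¹ / s := by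
    intro y
    apply ratio_bd hs hβ
    simpa using abs_le_one_add_sq y
  have hg6b : ∀ y : ℝ, |1 / (s * (1 + β * y ^ 2))| ≤ 1 * max 1 β⁻¹ / s := by
    intro y
    apply ratio_bd hs hβ
    rw [abs_one]; nlinarith [sq_nonneg y]
  obtain ⟨hi2, hz2⟩ := corr_term P hYm hIYε' hε' hε'int hε'mean _ hg2m _ hg2b (-b₀)
  obtain ⟨hi3, hz3⟩ := corr_term P hYm hIYε hε hεint hεmean _ hg3m _ hg3b (-1)
  obtain ⟨hi4, hz4⟩ := corr_term P hYm hIYε'2 ((hε'.pow_const 2).sub measurable_const)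
    (hε'sq.sub (integrable_const _)) hm3 _ hg4m _ hg4b (-(b₀ ^ 2 / 2))
  obtain ⟨hi5, hz5⟩ := corr_term P hYm hIYεε' (hε.mul hε')
    (hIεε'.integrable_mul hεint hε'int) hm4 _ hg5m _ hg5b (-b₀)
  obtain ⟨hi6, hz6⟩ := corr_term P hYm hIYε2 ((hε.pow_const 2).sub measurable_const)
    (hεsq.sub (integrable_const _)) hm5 _ hg6m _ hg6b (-(1 / 2))
  have hi2' : Integrable (fun ω => (-b₀ * ((μ₀ - μ + (φ₀ - φ) * Y ω) * Y ω / (s * (1 + β * Y ω ^ 2)) * ε' ω))) P := hi2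
  have hi3' : Integrable (fun ω => (-1 * ((μ₀ - μ + (φ₀ - φ) * Y ω) / (s * (1 + β * Y ω ^ 2)) * ε ω))) P := hi3
  have hi4' : Integrable (fun ω => (-(b₀ ^ 2 / 2) * (Y ω ^ 2 / (s * (1 + β * Y ω ^ 2)) * (ε' ω ^ 2 - σ₀sq)))) P := hi4
  have hi5' : Integrable (fun ω => (-b₀ * (Y ω / (s * (1 + β * Y ω ^ 2)) * (ε ω * ε' ω)))) P := hi5
  have hi6' : Integrable (fun ω => (-(1 / 2) * (1 / (s * (1 + β * Y ω ^ 2)) * (ε ω ^ 2 - σ₀sq)))) P := hi6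
  have hz2' : ∫ ω, (-b₀ * ((μ₀ - μ + (φ₀ - φ) * Y ω) * Y ω / (s * (1 + β * Y ω ^ 2)) * ε' ω)) ∂P = 0 := hz2
  have hz3' : ∫ ω, (-1 * ((μ₀ - μ + (φ₀ - φ) * Y ω) / (s * (1 + β * Y ω ^ 2)) * ε ω)) ∂P = 0 := hz3
  have hz4' : ∫ ω, (-(b₀ ^ 2 / 2) * (Y ω ^ 2 / (s * (1 + β * Y ω ^ 2)) * (ε' ω ^ 2 - σ₀sq))) ∂P = 0 := hz4
  have hz5' : ∫ ω, (-b₀ * (Y ω / (s * (1 + β * Y ω ^ 2)) * (ε ω * ε' ω))) ∂P = 0 := hz5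
  have hz6' : ∫ ω, (-(1 / 2) * (1 / (s * (1 + β * Y ω ^ 2)) * (ε ω ^ 2 - σ₀sq))) ∂P = 0 := hz6
  have hF : Integrable (fun ω => (Real.log (s * (1 + β * Y ω ^ 2)) + ((μ₀ - μ + (φ₀ - φ) * Y ω) ^ 2 + σ₀sq * (1 + b₀ ^ 2 * Y ω ^ 2)) / (s * (1 + β * Y ω ^ 2)))) P :=
    F_integrable P hYm δ hδ hYδ (μ₀ - μ) (φ₀ - φ) σ₀sq b₀ s β hs hβ hσ0
  have hid : ∀ ω, qll Y (fun ω => μ₀ + φ₀ * Y ω + b₀ * Y ω * ε' ω + ε ω) (μ, φ, s, β) ω =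
      (-(1/2) * (Real.log (s * (1 + β * Y ω ^ 2)) + ((μ₀ - μ + (φ₀ - φ) * Y ω) ^ 2 + σ₀sq * (1 + b₀ ^ 2 * Y ω ^ 2)) / (s * (1 + β * Y ω ^ 2))) + (((-b₀ * ((μ₀ - μ + (φ₀ - φ) * Y ω) * Y ω / (s * (1 + β * Y ω ^ 2)) * ε' ω)) + (-1 * ((μ₀ - μ + (φ₀ - φ) * Y ω) / (s * (1 + β * Y ω ^ 2)) * ε ω))) + ((-(b₀ ^ 2 / 2) * (Y ω ^ 2 / (s * (1 + β * Y ω ^ 2)) * (ε' ω ^ 2 - σ₀sq))) + (-b₀ * (Y ω / (s * (1 + β * Y ω ^ 2)) * (ε ω * ε' ω)))) + (-(1 / 2) * (1 / (s * (1 + β * Y ω ^ 2)) * (ε ω ^ 2 - σ₀sq))))) := by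
    intro ω
    have hV : s * (1 + β * Y ω ^ 2) ≠ 0 := by positivity
    simp only [qll]
    field_simp
    ring
  have hs23 : Integrable (fun ω => (-b₀ * ((μ₀ - μ + (φ₀ - φ) * Y ω) * Y ω / (s * (1 + β * Y ω ^ 2)) * ε' ω)) + (-1 * ((μ₀ - μ + (φ₀ - φ) * Y ω) / (s * (1 + β * Y ω ^ 2)) * ε ω))) P := hi2'.add hi3'
  have hs45 : Integrable (fun ω => (-(b₀ ^ 2 / 2) * (Y ω ^ 2 / (s * (1 + β * Y ω ^ 2)) * (ε' ω ^ 2 - σ₀sq))) + (-b₀ * (Y ω / (s * (1 + β * Y ω ^ 2)) * (ε ω * ε' ω)))) P := hi4'.add hi5'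
  have hs2345 : Integrable (fun ω => ((-b₀ * ((μ₀ - μ + (φ₀ - φ) * Y ω) * Y ω / (s * (1 + β * Y ω ^ 2)) * ε' ω)) + (-1 * ((μ₀ - μ + (φ₀ - φ) * Y ω) / (s * (1 + β * Y ω ^ 2)) * ε ω))) + ((-(b₀ ^ 2 / 2) * (Y ω ^ 2 / (s * (1 + β * Y ω ^ 2)) * (ε' ω ^ 2 - σ₀sq))) + (-b₀ * (Y ω / (s * (1 + β * Y ω ^ 2)) * (ε ω * ε' ω))))) P := hs23.add hs45
  have hsR : Integrable (fun ω => (((-b₀ * ((μ₀ - μ + (φ₀ - φ) * Y ω) * Y ω / (s * (1 + β * Y ω ^ 2)) * ε' ω)) + (-1 * ((μ₀ - μ + (φ₀ - φ) * Y ω) / (s * (1 + β * Y ω ^ 2)) * ε ω))) + ((-(b₀ ^ 2 / 2) * (Y ω ^ 2 / (s * (1 + β * Y ω ^ 2)) * (ε' ω ^ 2 - σ₀sq))) + (-b₀ * (Y ω / (s * (1 + β * Y ω ^ 2)) * (ε ω * ε' ω))))) + (-(1 / 2) * (1 / (s * (1 + β * Y ω ^ 2)) * (ε ω ^ 2 -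 σ₀sq)))) P := hs2345.add hi6'
  have hFc : Integrable (fun ω => -(1/2) * (Real.log (s * (1 + β * Y ω ^ 2)) + ((μ₀ - μ + (φ₀ - φ) * Y ω) ^ 2 + σ₀sq * (1 + b₀ ^ 2 * Y ω ^ 2)) / (s * (1 + β * Y ω ^ 2)))) P := hF.const_mul (-(1/2))
  have hGint : Integrable (fun ω => (-(1/2) * (Real.log (s * (1 + β * Y ω ^ 2)) + ((μ₀ - μ + (φ₀ - φ) * Y ω) ^ 2 + σ₀sq * (1 + b₀ ^ 2 * Y ω ^ 2)) / (s * (1 + β * Y ω ^ 2))) + (((-b₀ * ((μ₀ - μ + (φ₀ - φ) * Y ω) * Y ω / (s * (1 + β * Y ω ^ 2)) * ε' ω)) + (-1 * ((μ₀ - μ + (φ₀ - φ) * Y ω) / (s * (1 + β * Y ω ^ 2)) * ε ω))) + ((-(b₀ ^ 2 / 2) * (Y ω ^ 2 / (s * (1 + β * Y ω ^ 2)) * (ε' ω ^ 2 - σ₀sq))) + (-b₀ * (Y ω / (s * (1 + β * Y ω ^ 2)) * (ε ω * ε' ω)))) + (-(1 / 2) * (1 / (s * (1 + β * Y ω ^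 2)) * (ε ω ^ 2 - σ₀sq)))))) P := hFc.add hsR
  constructor
  · exact hGint.congr (Filter.Eventually.of_forall fun ω => (hid ω).symm)
  · calc ∫ ω, qll Y (fun ω => μ₀ + φ₀ * Y ω + b₀ * Y ω * ε' ω + ε ω) (μ, φ, s, β) ω ∂P
        = ∫ ω, (-(1/2) * (Real.log (s * (1 + β * Y ω ^ 2)) + ((μ₀ - μ + (φ₀ - φ) * Y ω) ^ 2 + σ₀sq * (1 + b₀ ^ 2 * Y ω ^ 2)) / (s * (1 + β * Y ω ^ 2))) + (((-b₀ * ((μ₀ - μ + (φ₀ - φ) * Y ω) * Y ω / (s * (1 + β * Y ω ^ 2)) * ε' ω)) + (-1 * ((μ₀ - μ + (φ₀ - φ) * Y ω) / (s * (1 + β * Y ω ^ 2)) * ε ω))) + ((-(b₀ ^ 2 / 2) * (Y ω ^ 2 / (s * (1 + β * Y ω ^ 2)) * (ε' ω ^ 2 - σ₀sq))) + (-b₀ * (Y ω / (s * (1 + β * Y ω ^ 2)) * (ε ω * ε' ω)))) + (-(1 / 2) * (1 / (s * (1 + β * Y ω ^ 2)) * (ε ω ^ 2 - σ₀sq)))))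 ∂P := integral_congr_ae (Filter.Eventually.of_forall hid)
      _ = -(1/2) * ∫ ω, (Real.log (s * (1 + β * Y ω ^ 2)) + ((μ₀ - μ + (φ₀ - φ) * Y ω) ^ 2 + σ₀sq * (1 + b₀ ^ 2 * Y ω ^ 2)) / (s * (1 + β * Y ω ^ 2))) ∂P := by
          rw [integral_add hFc hsR, integral_add hs2345 hi6', integral_add hs23 hs45,
            integral_add hi2' hi3', integral_add hi4' hi5',
            hz2', hz3', hz4', hz5', hz6', integral_const_mul]
          ring

end Aux

set_option maxHeartbeats 1000000 in
/-- `θ ↦ E ℓ(θ)` is finite on `Θ` and achieves its unique maximum over `Θ`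
at `θ₀ = (μ₀, φ₀, σ₀², b₀²)`. -/
theorem qll_expectation_unique_maximum
    {Ω : Type*} [MeasurableSpace Ω] (P : Measure Ω) [IsProbabilityMeasure P]
    (Y ε ε' : Ω → ℝ)
    (hYm : Measurable Y) (hε : Measurable ε) (hε' : Measurable ε')
    (hindep : iIndepFun ![Y, ε, ε'] P)
    (μ₀ φ₀ b₀ σ₀sq : ℝ)
    (hεint : Integrable ε P) (hεmean : ∫ ω, ε ω ∂P = 0)
    (hε'int : Integrable ε' P) (hε'mean : ∫ ω, ε' ω ∂P = 0)
    (hεsq : Integrable (fun ω => ε ω ^ 2) P) (hεvar : ∫ ω, ε ω ^ 2 ∂P = σ₀sq)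
    (hε'sq : Integrable (fun ω => ε' ω ^ 2) P) (hε'var : ∫ ω, ε' ω ^ 2 ∂P = σ₀sq)
    (hσ : 0 < σ₀sq)
    (μb φb ωl ωu αl αu : ℝ)
    (hμb : 0 < μb) (hφb : 0 < φb) (hωl : 0 < ωl) (hωu : ωl ≤ ωu)
    (hαl : 0 < αl) (hαu : αl ≤ αu)
    (hθ₀ : (μ₀, φ₀, σ₀sq, b₀ ^ 2) ∈ Theta μb φb ωl ωu αl αu)
    (δ : ℝ) (hδ : 0 < δ) (hδ1 : δ < 1)
    (hYδ : Integrable (fun ω => |Y ω| ^ δ) P)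
    (hndY : ∀ c : ℝ, P {ω | Y ω = c} < 1)
    (hndY2 : ∀ c : ℝ, P {ω | Y ω ^ 2 = c} < 1) :
    ∀ θ ∈ Theta μb φb ωl ωu αl αu,
      Integrable (qll Y (fun ω => μ₀ + φ₀ * Y ω + b₀ * Y ω * ε' ω + ε ω) θ) P ∧
      ∫ ω, qll Y (fun ω => μ₀ + φ₀ * Y ω + b₀ * Y ω * ε' ω + ε ω) θ ω ∂P ≤
        ∫ ω, qll Y (fun ω => μ₀ + φ₀ * Y ω + b₀ * Y ω * ε' ω + ε ω)
          (μ₀, φ₀, σ₀sq, b₀ ^ 2) ω ∂P ∧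
      ((∫ ω, qll Y (fun ω => μ₀ + φ₀ * Y ω + b₀ * Y ω * ε' ω + ε ω) θ ω ∂P =
        ∫ ω, qll Y (fun ω => μ₀ + φ₀ * Y ω + b₀ * Y ω * ε' ω + ε ω)
          (μ₀, φ₀, σ₀sq, b₀ ^ 2) ω ∂P) ↔ θ = (μ₀, φ₀, σ₀sq, b₀ ^ 2)) := by
  intro θ hθ
  obtain ⟨μ, φ, s, β⟩ := θ
  simp only [Theta, Set.mem_setOf_eq] at hθ hθ₀
  obtain ⟨hθ1, hθ2, hθ3, hθ4, hθ5, hθ6⟩ := hθ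
  have hs : 0 < s := lt_of_lt_of_le hωl hθ3
  have hβ : 0 < β := lt_of_lt_of_le hαl hθ5
  have hb₀ : 0 < b₀ ^ 2 := lt_of_lt_of_le hαl hθ₀.2.2.2.2.1
  obtain ⟨hint, hform⟩ := qll_aux P Y ε ε' hYm hε hε' hindep μ₀ φ₀ b₀ σ₀sq hεint hεmean
    hε'int hε'mean hεsq hεvar hε'sq hε'var hσ.le δ hδ hYδ μ φ s β hs hβ
  obtain ⟨hint0, hform0⟩ := qll_aux P Y ε ε' hYm hε hε' hindep μ₀ φ₀ b₀ σ₀sq hεint hεmean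
    hε'int hε'mean hεsq hεvar hε'sq hε'var hσ.le δ hδ hYδ μ₀ φ₀ σ₀sq (b₀ ^ 2) hσ hb₀
  have hFint : Integrable (fun ω => (Real.log (s * (1 + β * Y ω ^ 2)) + ((μ₀ - μ + (φ₀ - φ) * Y ω) ^ 2 + σ₀sq * (1 + b₀ ^ 2 * Y ω ^ 2)) / (s * (1 + β * Y ω ^ 2)))) P :=
    F_integrable P hYm δ hδ hYδ (μ₀ - μ) (φ₀ - φ) σ₀sq b₀ s β hs hβ hσ.le
  have hF0int : Integrable (fun ω => (Real.log (σ₀sq * (1 + b₀ ^ 2 * Y ω ^ 2)) + ((μ₀ - μ₀ + (φ₀ - φ₀) * Y ω) ^ 2 + σ₀sq * (1 + b₀ ^ 2 * Y ω ^ 2)) / (σ₀sq * (1 + b₀ ^ 2 * Y ω ^ 2)))) P :=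
    F_integrable P hYm δ hδ hYδ (μ₀ - μ₀) (φ₀ - φ₀) σ₀sq b₀ σ₀sq (b₀ ^ 2) hσ hb₀ hσ.le
  have hF0eq : ∀ ω, (Real.log (σ₀sq * (1 + b₀ ^ 2 * Y ω ^ 2)) + ((μ₀ - μ₀ + (φ₀ - φ₀) * Y ω) ^ 2 + σ₀sq * (1 + b₀ ^ 2 * Y ω ^ 2)) / (σ₀sq * (1 + b₀ ^ 2 * Y ω ^ 2))) = Real.log (σ₀sq * (1 + b₀ ^ 2 * Y ω ^ 2)) + 1 := by
    intro ω
    have hv : (σ₀sq * (1 + b₀ ^ 2 * Y ω ^ 2)) ≠ 0 := by positivity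
    have h0 : μ₀ - μ₀ + (φ₀ - φ₀) * Y ω = 0 := by ring
    rw [h0, show (0:ℝ) ^ 2 + σ₀sq * (1 + b₀ ^ 2 * Y ω ^ 2) = (σ₀sq * (1 + b₀ ^ 2 * Y ω ^ 2)) by ring, div_self hv]
  have hpt : ∀ ω, Real.log (σ₀sq * (1 + b₀ ^ 2 * Y ω ^ 2)) + 1 ≤ (Real.log (s * (1 + β * Y ω ^ 2)) + ((μ₀ - μ + (φ₀ - φ) * Y ω) ^ 2 + σ₀sq * (1 + b₀ ^ 2 * Y ω ^ 2)) / (s * (1 + β * Y ω ^ 2))) :=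
    fun ω => (kl_ineq _ _ _ (by positivity) (by positivity)).1
  have hmono : ∫ ω, (Real.log (σ₀sq * (1 + b₀ ^ 2 * Y ω ^ 2)) + ((μ₀ - μ₀ + (φ₀ - φ₀) * Y ω) ^ 2 + σ₀sq * (1 + b₀ ^ 2 * Y ω ^ 2)) / (σ₀sq * (1 + b₀ ^ 2 * Y ω ^ 2))) ∂P ≤ ∫ ω, (Real.log (s * (1 + β * Y ω ^ 2)) + ((μ₀ - μ + (φ₀ - φ) * Y ω) ^ 2 + σ₀sq * (1 + b₀ ^ 2 * Y ω ^ 2)) / (s * (1 + β * Y ω ^ 2))) ∂P := by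
    apply integral_mono hF0int hFint
    intro ω
    calc (Real.log (σ₀sq * (1 + b₀ ^ 2 * Y ω ^ 2)) + ((μ₀ - μ₀ + (φ₀ - φ₀) * Y ω) ^ 2 + σ₀sq * (1 + b₀ ^ 2 * Y ω ^ 2)) / (σ₀sq * (1 + b₀ ^ 2 * Y ω ^ 2))) = Real.log (σ₀sq * (1 + b₀ ^ 2 * Y ω ^ 2)) + 1 := hF0eq ω
      _ ≤ (Real.log (s * (1 + β * Y ω ^ 2)) + ((μ₀ - μ + (φ₀ - φ) * Y ω) ^ 2 + σ₀sq * (1 + b₀ ^ 2 * Y ω ^ 2)) / (s * (1 + β * Y ω ^ 2))) := hpt ω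
  refine ⟨hint, ?_, ?_⟩
  · rw [hform, hform0]
    linarith
  constructor
  · intro heq
    have h2 : ∫ ω, (Real.log (s * (1 + β * Y ω ^ 2)) + ((μ₀ - μ + (φ₀ - φ) * Y ω) ^ 2 + σ₀sq * (1 + b₀ ^ 2 * Y ω ^ 2)) / (s * (1 + β * Y ω ^ 2))) ∂P = ∫ ω, (Real.log (σ₀sq * (1 + b₀ ^ 2 * Y ω ^ 2)) + ((μ₀ - μ₀ + (φ₀ - φ₀) * Y ω) ^ 2 + σ₀sq * (1 + b₀ ^ 2 * Y ω ^ 2)) / (σ₀sq * (1 + b₀ ^ 2 * Y ω ^ 2))) ∂P := by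
      rw [hform, hform0] at heq
      linarith
    have hDnn : (0 : Ω → ℝ) ≤ fun ω => (Real.log (s * (1 + β * Y ω ^ 2)) + ((μ₀ - μ + (φ₀ - φ) * Y ω) ^ 2 + σ₀sq * (1 + b₀ ^ 2 * Y ω ^ 2)) / (s * (1 + β * Y ω ^ 2))) - (Real.log (σ₀sq * (1 + b₀ ^ 2 * Y ω ^ 2)) + ((μ₀ - μ₀ + (φ₀ - φ₀) * Y ω) ^ 2 + σ₀sq * (1 + b₀ ^ 2 * Y ω ^ 2)) / (σ₀sq * (1 + b₀ ^ 2 * Y ω ^ 2))) := by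
      intro ω
      have h3 := hpt ω
      have h4 := hF0eq ω
      simp only [Pi.zero_apply]
      linarith
    have hDz : ∫ ω, ((Real.log (s * (1 + β * Y ω ^ 2)) + ((μ₀ - μ + (φ₀ - φ) * Y ω) ^ 2 + σ₀sq * (1 + b₀ ^ 2 * Y ω ^ 2)) / (s * (1 + β * Y ω ^ 2))) - (Real.log (σ₀sq * (1 + b₀ ^ 2 * Y ω ^ 2)) + ((μ₀ - μ₀ + (φ₀ - φ₀) * Y ω) ^ 2 + σ₀sq * (1 + b₀ ^ 2 * Y ω ^ 2)) / (σ₀sq * (1 + b₀ ^ 2 * Y ω ^ 2)))) ∂P = 0 := by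
      rw [integral_sub hFint hF0int, h2, sub_self]
    have hae : (fun ω => (Real.log (s * (1 + β * Y ω ^ 2)) + ((μ₀ - μ + (φ₀ - φ) * Y ω) ^ 2 + σ₀sq * (1 + b₀ ^ 2 * Y ω ^ 2)) / (s * (1 + β * Y ω ^ 2))) - (Real.log (σ₀sq * (1 + b₀ ^ 2 * Y ω ^ 2)) + ((μ₀ - μ₀ + (φ₀ - φ₀) * Y ω) ^ 2 + σ₀sq * (1 + b₀ ^ 2 * Y ω ^ 2)) / (σ₀sq * (1 + b₀ ^ 2 * Y ω ^ 2)))) =ᵐ[P] 0 :=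
      (integral_eq_zero_iff_of_nonneg hDnn (hFint.sub hF0int)).mp hDz
    have hae2 : ∀ᵐ ω ∂P, (μ₀ - μ + (φ₀ - φ) * Y ω = 0 ∧
        s * (1 + β * Y ω ^ 2) = σ₀sq * (1 + b₀ ^ 2 * Y ω ^ 2)) := by
      filter_upwards [hae] with ω hω
      simp only [Pi.zero_apply] at hω
      have h4 := hF0eq ω
      have heqpt : Real.log (σ₀sq * (1 + b₀ ^ 2 * Y ω ^ 2)) + 1 = (Real.log (s * (1 + β * Y ω ^ 2)) + ((μ₀ - μ + (φ₀ - φ) * Y ω) ^ 2 + σ₀sq * (1 + b₀ ^ 2 * Y ω ^ 2)) / (s * (1 + β * Y ω ^ 2))) := by linarith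
      exact ((kl_ineq _ _ _ (by positivity) (by positivity)).2).mp heqpt
    obtain ⟨hμeq, hφeq⟩ := affine_ae_zero P hYm hndY (μ₀ - μ) (φ₀ - φ)
      (hae2.mono fun ω h => h.1)
    obtain ⟨hseq, hβeq⟩ := affine_ae_zero P (hYm.pow_const 2) hndY2 (s - σ₀sq)
      (s * β - σ₀sq * b₀ ^ 2) (hae2.mono fun ω h => by linear_combination h.2)
    have hs' : s = σ₀sq := by linarith
    subst hs'
    have hβ' : β = b₀ ^ 2 := mul_left_cancel₀ (ne_of_gt hσ) (by linarith)
    have hμ' : μ = μ₀ := by linarith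
    have hφ' : φ = φ₀ := by linarith
    rw [hμ', hφ', hβ']
  · intro heq
    rw [heq]
end
end
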